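/- arXiv:2410.03388 — 6 statements merged into one kernel-verified Lean document; each statement's English description precedes it below -/
import Mathlib

section
/- Let n ≥ 2 and let d_{i_1},…,d_{i_p}, d_0 ∈ {0,1,…,n−1}^k, and for a digit d set S_d(x) = (x+d)/n. Let c_0 = d_0/(n−1) be the fixed point of S_{d_0}. Then c_0 ∈ S_{d_{i_1}}∘S_{d_{i_2}}∘…∘S_{d_{i_p}}([0,1]^k) if and only if d_{i_1} = d_{i_2} = … = d_{i_p} = d_0. -/
open Set Pointwise MeasureTheory

noncomputable section

/-- Points of `ℝ^k`. -/
abbrev Pt (k : ℕ) := Fin k → ℝ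

/-- A vector with all coordinates in `{0, 1, …, n−1}`. -/
def IsDigit (n : ℕ) {k : ℕ} (d : Pt k) : Prop :=
  ∀ i, ∃ m : ℕ, m < n ∧ d i = (m : ℝ)

/-- A digit set: a nonempty subset of `{0, 1, …, n−1}^k`. -/
def IsDigitSet (n : ℕ) {k : ℕ} (D : Set (Pt k)) : Prop :=
  D.Nonempty ∧ ∀ d ∈ D, IsDigit n d

/-- `K` is the fractal `k`-cube of order `n` with digit set `D`:
a nonempty compact set with `nK = K + D`. -/
def IsFractalCube (n : ℕ) {k : ℕ} (D K : Set (Pt k)) : Prop :=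
  K.Nonempty ∧ IsCompact K ∧ (n : ℝ) • K = K + D

/-- `α ∈ A_k = {−1, 0, 1}^k`. -/
def IsAk {k : ℕ} (α : Pt k) : Prop :=
  ∀ i, α i = -1 ∨ α i = 0 ∨ α i = 1

/-- The unit cube `P = [0,1]^k`. -/
def unitCube (k : ℕ) : Set (Pt k) := {x | ∀ i, 0 ≤ x i ∧ x i ≤ 1}

/-- The face `P_α = P ∩ (P + α)`. -/
def face {k : ℕ} (α : Pt k) : Set (Pt k) :=
  unitCube k ∩ ((fun x => x + α) '' unitCube k)

/-- `α ⊑ β` : `β i = α i` whenever `α i ≠ 0`. -/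
def SqLe {k : ℕ} (α β : Pt k) : Prop := ∀ i, α i ≠ 0 → β i = α i

/-- `α ⊏ β`. -/
def SqLt {k : ℕ} (α β : Pt k) : Prop := SqLe α β ∧ α ≠ β

/-- `F_α = K₁ ∩ (K₂ + α)`. -/
def interF {k : ℕ} (K1 K2 : Set (Pt k)) (α : Pt k) : Set (Pt k) :=
  K1 ∩ ((fun x => x + α) '' K2)

/-- `G_{αβ} = D₁ ∩ (D₂ + nα − β)`. -/
def Gab (n : ℕ) {k : ℕ} (D1 D2 : Set (Pt k)) (α β : Pt k) : Set (Pt k) :=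
  D1 ∩ ((fun x => x + ((n : ℝ) • α - β)) '' D2)

/-- `G_α = G_{αα} = D₁ ∩ (D₂ + (n−1)α)`. -/
def Ga (n : ℕ) {k : ℕ} (D1 D2 : Set (Pt k)) (α : Pt k) : Set (Pt k) :=
  Gab n D1 D2 α α

/-- `β ≻ α` : there is a chain `α = α₀ ⊏ α₁ ⊏ … ⊏ α_p = β` in `A_k` (`p ≥ 1`)
with all `F_{α_j}` nonempty and all `G_{α_{j−1} α_j}` nonempty. -/
def GSucc (n : ℕ) {k : ℕ} (D1 D2 K1 K2 : Set (Pt k)) (β α : Pt k) : Prop :=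
  ∃ p : ℕ, 0 < p ∧ ∃ c : ℕ → Pt k, c 0 = α ∧ c p = β ∧
    (∀ j ≤ p, IsAk (c j)) ∧
    (∀ j < p, SqLt (c j) (c (j + 1))) ∧
    (∀ j ≤ p, (interF K1 K2 (c j)).Nonempty) ∧
    (∀ j < p, (Gab n D1 D2 (c j) (c (j + 1))).Nonempty)

/-- `β ≽ α`. -/
def GSuccEq (n : ℕ) {k : ℕ} (D1 D2 K1 K2 : Set (Pt k)) (β α : Pt k) : Prop :=
  GSucc n D1 D2 K1 K2 β α ∨ β = α

/-- The map `S_d(x) = (x + d)/n`. -/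
def Sdig (n : ℕ) {k : ℕ} (d : Pt k) : Pt k → Pt k :=
  fun x => (n : ℝ)⁻¹ • (x + d)

/-- The `p`-th refinement digit set
`D^(p) = { n^{p−1} d₁ + n^{p−2} d₂ + … + d_p : (d₁, …, d_p) ∈ D^p }`. -/
def refineD (n p : ℕ) {k : ℕ} (D : Set (Pt k)) : Set (Pt k) :=
  {x | ∃ f : Fin p → Pt k, (∀ j, f j ∈ D) ∧
    x = ∑ j : Fin p, ((n : ℝ) ^ (p - 1 - (j : ℕ))) • f j}

/-- A maximal vertex of the structure graph: `F_β ≠ ∅` and no `γ ≻ β`. -/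
def IsMaxVertex (n : ℕ) {k : ℕ} (D1 D2 K1 K2 : Set (Pt k)) (β : Pt k) : Prop :=
  IsAk β ∧ (interF K1 K2 β).Nonempty ∧ ¬∃ γ, IsAk γ ∧ GSucc n D1 D2 K1 K2 γ β

/-- The product `∏ #G_{α_j α_{j+1}}` over consecutive pairs of a chain. -/
def chainProd (n : ℕ) {k : ℕ} (D1 D2 : Set (Pt k)) : List (Pt k) → ℕ
  | [] => 1
  | [_] => 1
  | a :: b :: rest => (Gab n D1 D2 a b).ncard * chainProd n D1 D2 (b :: rest)

/-- A chain `α = α₁ ⊏ α₂ ⊏ … ⊏ α_p = β` inside `Γ_α` ending at a maximal vertex `β`. -/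
def IsMaxChainFrom (n : ℕ) {k : ℕ} (D1 D2 K1 K2 : Set (Pt k)) (α : Pt k)
    (c : List (Pt k)) : Prop :=
  c ≠ [] ∧ c.head? = some α ∧ List.Chain' SqLt c ∧
  (∀ β ∈ c, IsAk β ∧ GSuccEq n D1 D2 K1 K2 β α) ∧
  ∃ β, c.getLast? = some β ∧ IsMaxVertex n D1 D2 K1 K2 β

/-! The cylinder `S_{e₁} ∘ ⋯ ∘ S_{e_p}([0,1]^k)` lies in `S_{e₁}([0,1]^k)`, and solving
`S_e(y) = c₀` coordinatewise gives `(n-1) yᵢ = n (d₀ᵢ - eᵢ) + eᵢ`; as `0 ≤ eᵢ < n`, this lies in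
`[0, n-1]` only when `eᵢ = d₀ᵢ`. So `e₁ = d₀` and the preimage of `c₀` is `c₀` itself, and one
peels off the maps one at a time. -/

lemma Int.eq_zero_of_mul_add_mem_Ico {n x b : ℤ} (hb : b ∈ Ico 0 n)
    (h : n * x + b ∈ Ico 0 n) : x = 0 := by
  obtain ⟨hb0, hbn⟩ := hb
  obtain ⟨h0, h1⟩ := h
  rcases lt_trichotomy x 0 with hx | hx | hx <;> nlinarith

section Digits

variable {k n : ℕ}

lemma Sdig_eq_iff (hn : n ≠ 0) {e y z : Pt k} : Sdig n e y = z ↔ y = (n : ℝ) • z - e := by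
  have hn' : (n : ℝ) ≠ 0 := Nat.cast_ne_zero.mpr hn
  rw [Sdig, inv_smul_eq_iff₀ hn', eq_sub_iff_add_eq, eq_comm]

lemma Sdig_fixedPoint (hn : 1 < n) (d0 : Pt k) :
    Sdig n d0 (((n : ℝ) - 1)⁻¹ • d0) = ((n : ℝ) - 1)⁻¹ • d0 := by
  have hn' : (n : ℝ) - 1 ≠ 0 := by
    have : (1 : ℝ) < n := by exact_mod_cast hn
    linarith
  rw [Sdig_eq_iff (by omega)]
  funext i
  simp only [Pi.sub_apply, Pi.smul_apply, smul_eq_mul]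
  field_simp
  ring

lemma fixedPoint_mem_unitCube {d0 : Pt k} (h0 : IsDigit n d0) :
    ((n : ℝ) - 1)⁻¹ • d0 ∈ unitCube k := by
  intro i
  obtain ⟨m, hm, hd⟩ := h0 i
  have hm' : (m : ℝ) + 1 ≤ n := by exact_mod_cast hm
  simp only [Pi.smul_apply, smul_eq_mul, hd]
  exact ⟨mul_nonneg (inv_nonneg.mpr (by linarith)) m.cast_nonneg,
    inv_mul_le_one_of_le₀ (by linarith) (by linarith)⟩

lemma Sdig_mapsTo_unitCube {e : Pt k} (he : IsDigit n e) :
    MapsTo (Sdig n e) (unitCube k) (unitCube k) := by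
  intro x hx i
  obtain ⟨m, hm, he⟩ := he i
  obtain ⟨hx0, hx1⟩ := hx i
  have hm' : (m : ℝ) + 1 ≤ n := by exact_mod_cast hm
  simp only [Sdig, Pi.smul_apply, Pi.add_apply, smul_eq_mul, he]
  exact ⟨mul_nonneg (by positivity) (by positivity),
    inv_mul_le_one_of_le₀ (by linarith) (by linarith)⟩

lemma foldr_Sdig_mapsTo_unitCube {L : List (Pt k)} (hL : ∀ e ∈ L, IsDigit n e) :
    MapsTo ((L.map (Sdig n)).foldr (· ∘ ·) id) (unitCube k) (unitCube k) := by
  induction L with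
  | nil => exact mapsTo_id _
  | cons e L ih =>
    exact (Sdig_mapsTo_unitCube (hL e (by simp))).comp (ih fun x hx => hL x (by simp [hx]))

lemma eq_of_natCast_mul_sub_mem_Icc {a b : ℕ} (hn : 1 < n) (hb : b < n)
    (h : (n : ℝ) * (((n : ℝ) - 1)⁻¹ * a) - b ∈ Icc 0 1) : b = a := by
  have hn' : (0 : ℝ) < n - 1 := by
    have : (1 : ℝ) < n := by exact_mod_cast hn
    linarith
  have hcast : (((n : ℤ) * ((a : ℤ) - b) + b : ℤ) : ℝ) =
      ((n : ℝ) - 1) * ((n : ℝ) * (((n : ℝ) - 1)⁻¹ * a) - b) := by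
    push_cast
    field_simp
    ring
  have hint : (n : ℤ) * ((a : ℤ) - b) + b ∈ Ico 0 (n : ℤ) := by
    constructor
    · exact_mod_cast hcast ▸ mul_nonneg hn'.le h.1
    · have : (((n : ℤ) * ((a : ℤ) - b) + b : ℤ) : ℝ) ≤ ((n - 1 : ℤ) : ℝ) := by
        rw [hcast]
        push_cast
        exact mul_le_of_le_one_right hn'.le h.2
      have := Int.cast_le.mp this
      omega
  have := Int.eq_zero_of_mul_add_mem_Ico ⟨by positivity, by exact_mod_cast hb⟩ hint
  omega

lemma Sdig_eq_fixedPoint_iff (hn : 1 < n) {d0 e y : Pt k} (h0 : IsDigit n d0)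
    (he : IsDigit n e) (hy : y ∈ unitCube k) :
    Sdig n e y = ((n : ℝ) - 1)⁻¹ • d0 ↔ e = d0 ∧ y = ((n : ℝ) - 1)⁻¹ • d0 := by
  constructor
  · intro h
    have hy' := (Sdig_eq_iff (by omega)).mp h
    have hed : e = d0 := by
      funext i
      obtain ⟨a, -, ha⟩ := h0 i
      obtain ⟨b, hb, hb'⟩ := he i
      have hyi := hy i
      rw [hy'] at hyi
      simp only [Pi.sub_apply, Pi.smul_apply, smul_eq_mul, ha, hb'] at hyi
      rw [ha, hb', eq_of_natCast_mul_sub_mem_Icc hn hb hyi]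
    subst hed
    exact ⟨rfl, hy'.trans ((Sdig_eq_iff (by omega)).mp (Sdig_fixedPoint hn e)).symm⟩
  · rintro ⟨rfl, rfl⟩
    exact Sdig_fixedPoint hn e

lemma fixedPoint_mem_foldr_Sdig_image_iff (hn : 1 < n) {d0 : Pt k} (h0 : IsDigit n d0)
    {L : List (Pt k)} (hL : ∀ e ∈ L, IsDigit n e) :
    ((n : ℝ) - 1)⁻¹ • d0 ∈ ((L.map (Sdig n)).foldr (· ∘ ·) id) '' unitCube k ↔
      ∀ e ∈ L, e = d0 := by
  induction L with
  | nil => simpa using fixedPoint_mem_unitCube h0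
  | cons e L ih =>
    have he : IsDigit n e := hL e (by simp)
    have hL' : ∀ x ∈ L, IsDigit n x := fun x hx => hL x (by simp [hx])
    rw [List.forall_mem_cons, ← ih hL', List.map_cons, List.foldr_cons, image_comp]
    constructor
    · rintro ⟨y, hy, hc⟩
      obtain ⟨rfl, rfl⟩ := (Sdig_eq_fixedPoint_iff hn h0 he
        ((foldr_Sdig_mapsTo_unitCube hL').image_subset hy)).mp hc
      exact ⟨rfl, hy⟩
    · rintro ⟨rfl, hc⟩
      exact ⟨_, hc, Sdig_fixedPoint hn e⟩

end Digits

theorem fixedPoint_mem_cylinder_iff_general {k n p : ℕ} (hn : 2 ≤ n)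
    (d : Fin p → Pt k) (hd : ∀ j, IsDigit n (d j))
    (d0 : Pt k) (h0 : IsDigit n d0) :
    ((n : ℝ) - 1)⁻¹ • d0 ∈
      ((List.ofFn fun j => Sdig n (d j)).foldr (· ∘ ·) id) '' unitCube k ↔
    ∀ j, d j = d0 := by
  have hmap : (List.ofFn fun j => Sdig n (d j)) = (List.ofFn d).map (Sdig n) := by
    rw [List.map_ofFn]; rfl
  have hdigits : ∀ e ∈ List.ofFn d, IsDigit n e := by simpa [List.mem_ofFn] using hd
  rw [hmap, fixedPoint_mem_foldr_Sdig_image_iff hn h0 hdigits]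
  simp [List.mem_ofFn]

/-- `c₀ = d₀/(n−1)` belongs to `S_{d_{i₁}} ∘ … ∘ S_{d_{i_p}}([0,1]^k)`
iff all the digits `d_{i_j}` are equal to `d₀`. -/
theorem fixedPoint_mem_cylinder_iff {k n p : ℕ} (hk : 1 ≤ k) (hn : 2 ≤ n) (hp : 1 ≤ p)
    (d : Fin p → Pt k) (hd : ∀ j, IsDigit n (d j))
    (d0 : Pt k) (h0 : IsDigit n d0) :
    ((n : ℝ) - 1)⁻¹ • d0 ∈
      ((List.ofFn fun j => Sdig n (d j)).foldr (· ∘ ·) id) '' unitCube k ↔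
    ∀ j, d j = d0 :=
  fixedPoint_mem_cylinder_iff_general hn d hd d0 h0
end
end

section
/- Let K be the fractal k-cube of order n with digit set D and let α ∈ A_k. Let pr'_α denote the orthogonal projection of ℝ^k onto E'_α = span{e_i : α_i ≠ 0}. Let d̄_0 ∈ pr'_α(D), let s̄_0 = d̄_0/(n−1), and let D̄_0 = (pr'_α)^{-1}(d̄_0) ∩ D. Then the section K ∩ (pr'_α)^{-1}(s̄_0) of K is exactly the fractal k-cube with digit set D̄_0, i.e., it equals the unique nonempty compact set X ⊆ ℝ^k with nX = X + D̄_0. -/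
open Set Pointwise MeasureTheory

noncomputable section

/-!
Let `s̄₀ = d̄₀/(n-1)` and `K₀ = K ∩ (pr'_α)⁻¹(s̄₀)`. If `x ∈ K₀` and `n x = y + d` with `y ∈ K`,
`d ∈ D`, then in every coordinate with `α i ≠ 0` we have `y_i + d_i = n s̄₀_i`, where
`(n-1) s̄₀_i = m₀` is a digit and `y_i ∈ [0,1]` because `K ⊆ [0,1]^k`; this forces `d_i = m₀`,
hence `d ∈ D̄₀` and `y ∈ K₀`, i.e. `n K₀ ⊆ K₀ + D̄₀`. The reverse inclusion is linearity of
`pr'_α` together with `n s̄₀ = s̄₀ + d̄₀`. `K₀` contains the fixed point `d̄/(n-1)` of `S_d̄` for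
any `d̄ ∈ D̄₀`, and a nonempty compact solution of `nX = X + D̄₀` is unique because the maps
`S_d` contract by `1/n`.
-/

theorem smul_inv_sub_one_smul {𝕜 W : Type*} [Field 𝕜] [AddCommGroup W] [Module 𝕜 W] {r : 𝕜}
    (hr : r ≠ 1) (v : W) : r • (r - 1)⁻¹ • v = (r - 1)⁻¹ • v + v :=
  calc r • (r - 1)⁻¹ • v = (r - 1)⁻¹ • v + (r - 1) • (r - 1)⁻¹ • v := by
        rw [sub_smul, one_smul, add_sub_cancel]
    _ = (r - 1)⁻¹ • v + v := by rw [smul_inv_smul₀ (sub_ne_zero.mpr hr)]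

theorem inter_preimage_add_subset {𝕜 V W : Type*} [Field 𝕜] [AddCommGroup V] [Module 𝕜 V]
    [AddCommGroup W] [Module 𝕜 W] (L : V →ₗ[𝕜] W) {r : 𝕜} (hr : r ≠ 0) {K D : Set V}
    (hKD : K + D ⊆ r • K) {s t : W} (hst : r • s = s + t) :
    K ∩ L ⁻¹' {s} + L ⁻¹' {t} ∩ D ⊆ r • (K ∩ L ⁻¹' {s}) := by
  rintro _ ⟨y, ⟨hy, hLy⟩, d, ⟨hLd, hd⟩, rfl⟩
  obtain ⟨z, hz, hzyd⟩ := hKD (add_mem_add hy hd)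
  refine ⟨z, ⟨hz, ?_⟩, hzyd⟩
  have hrLz : r • L z = r • s := by
    simp only [mem_preimage, mem_singleton_iff] at hLy hLd
    simp only at hzyd
    rw [← map_smul, hzyd, map_add, hLy, hLd, hst]
  exact smul_right_injective W hr hrLz

section Contraction

variable {V : Type*} [NormedAddCommGroup V] [NormedSpace ℝ V]

/-- Every `a ∈ X` is `r⁻¹ • (a' + d)` with `a' ∈ X`, `d ∈ E`, and `y ↦ r⁻¹ • (y + d)` maps `Y` into
itself while contracting distances by `r⁻¹`; so `X` lies within `C r⁻ᵐ` of `Y` for every `m`. -/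
theorem subset_of_smul_subset_add {r : ℝ} (hr : 1 < r) {E X Y : Set V}
    (hX : Bornology.IsBounded X) (hYc : IsClosed Y) (hYne : Y.Nonempty)
    (hXE : r • X ⊆ X + E) (hYE : Y + E ⊆ r • Y) : X ⊆ Y := by
  have hr0 : r ≠ 0 := by positivity
  obtain ⟨y₀, hy₀⟩ := hYne
  obtain ⟨C, hC⟩ := (Metric.isBounded_iff_subset_closedBall y₀).mp hX
  have approx : ∀ m : ℕ, ∀ a ∈ X, ∃ y ∈ Y, dist a y ≤ C * r⁻¹ ^ m := by
    intro m
    induction m with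
    | zero => exact fun a ha => ⟨y₀, hy₀, by simpa using hC ha⟩
    | succ m ih =>
      intro a ha
      obtain ⟨a', ha', d, hd, had⟩ := hXE (smul_mem_smul_set ha)
      obtain ⟨y, hy, hay⟩ := ih a' ha'
      obtain ⟨z, hz, hzy⟩ := hYE (add_mem_add hy hd)
      refine ⟨z, hz, ?_⟩
      calc dist a z = dist (r⁻¹ • (a' + d)) (r⁻¹ • (y + d)) := by
            simp only at had hzy
            rw [had, ← hzy, inv_smul_smul₀ hr0, inv_smul_smul₀ hr0]
        _ = r⁻¹ * dist a' y := by
            rw [dist_smul₀, dist_add_right, Real.norm_of_nonneg (by positivity)]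
        _ ≤ r⁻¹ * (C * r⁻¹ ^ m) := by gcongr
        _ = C * r⁻¹ ^ (m + 1) := by ring
  intro a ha
  rw [← hYc.closure_eq, Metric.mem_closure_iff]
  intro ε hε
  have hlim : Filter.Tendsto (fun m : ℕ => C * r⁻¹ ^ m) Filter.atTop (nhds 0) := by
    simpa using (tendsto_pow_atTop_nhds_zero_of_lt_one (by positivity)
      (inv_lt_one_of_one_lt₀ hr)).const_mul C
  obtain ⟨m, hm⟩ := (hlim.eventually (gt_mem_nhds hε)).exists
  obtain ⟨y, hy, hay⟩ := approx m a ha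
  exact ⟨y, hy, hay.trans_lt hm⟩

theorem eq_of_smul_eq_add {r : ℝ} (hr : 1 < r) {E X Y : Set V}
    (hXc : IsCompact X) (hXne : X.Nonempty) (hYc : IsCompact Y) (hYne : Y.Nonempty)
    (hXE : r • X = X + E) (hYE : r • Y = Y + E) : X = Y :=
  (subset_of_smul_subset_add hr hXc.isBounded hYc.isClosed hYne hXE.subset hYE.symm.subset).antisymm
    (subset_of_smul_subset_add hr hYc.isBounded hXc.isClosed hXne hYE.subset hXE.symm.subset)

end Contraction

theorem natCast_eq_of_add_eq_mul {n m m₀ : ℕ} (hn : 2 ≤ n) (hm : m < n) (hm₀ : m₀ < n)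
    {y : ℝ} (hy : y ∈ Icc (0 : ℝ) 1) (h : y + m = n * (((n : ℝ) - 1)⁻¹ * m₀)) : m = m₀ := by
  set c := ((n : ℝ) - 1)⁻¹ * m₀
  have hn1 : (1 : ℝ) < n := Nat.one_lt_cast.mpr hn
  have hc : ((n : ℝ) - 1) * c = m₀ := mul_inv_cancel_left₀ (by linarith) _
  have hmn : (m : ℝ) + 1 ≤ n := by exact_mod_cast hm
  have hm₀n : (m₀ : ℝ) + 1 ≤ n := by exact_mod_cast hm₀
  obtain ⟨hy0, hy1⟩ := hy
  -- `y = c + (m₀ - m)` with `c ∈ [0, 1]`: `m < m₀` would force `c = 0`, i.e. `m₀ = 0`,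
  -- and `m > m₀` would force `c = 1`, i.e. `m₀ = n - 1`.
  by_contra hne
  rcases Nat.lt_or_gt_of_ne hne with hlt | hgt
  · have : (m : ℝ) + 1 ≤ m₀ := by exact_mod_cast hlt
    nlinarith
  · have : (m₀ : ℝ) + 1 ≤ m := by exact_mod_cast hgt
    nlinarith

section FractalCube

variable {n k : ℕ}

theorem IsDigit.mem_Icc {d : Pt k} (hd : IsDigit n d) (i : Fin k) :
    d i ∈ Icc (0 : ℝ) (n - 1) := by
  obtain ⟨m, hm, hdm⟩ := hd i
  have : (m : ℝ) + 1 ≤ n := by exact_mod_cast hm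
  rw [hdm]
  exact ⟨m.cast_nonneg, by linarith⟩

theorem isClosed_unitCube : IsClosed (unitCube k) := by
  simp only [unitCube, ofPred_forall]
  exact isClosed_iInter fun i =>
    (isClosed_le continuous_const (continuous_apply i)).inter
      (isClosed_le (continuous_apply i) continuous_const)

theorem unitCube_add_subset (hn : 0 < n) {D : Set (Pt k)} (hD : ∀ d ∈ D, IsDigit n d) :
    unitCube k + D ⊆ (n : ℝ) • unitCube k := by
  have hn0 : (0 : ℝ) < n := Nat.cast_pos.mpr hn
  rintro _ ⟨x, hx, d, hd, rfl⟩
  refine ⟨(n : ℝ)⁻¹ • (x + d), fun i => ?_, smul_inv_smul₀ hn0.ne' _⟩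
  obtain ⟨hx0, hx1⟩ := hx i
  obtain ⟨hd0, hd1⟩ := (hD d hd).mem_Icc i
  simp only [Pi.smul_apply, Pi.add_apply, smul_eq_mul, ← div_eq_inv_mul]
  exact ⟨div_nonneg (by linarith) hn0.le, (div_le_one hn0).mpr (by linarith)⟩

/-- The orthogonal projection `pr'_α` onto `E'_α = span {e_i : α i ≠ 0}`. -/
def coordProj (α : Pt k) : Pt k →ₗ[ℝ] Pt k :=
  LinearMap.pi fun i => if α i = 0 then 0 else LinearMap.proj i

theorem coordProj_apply (α x : Pt k) (i : Fin k) :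
    coordProj α x i = if α i = 0 then 0 else x i := by
  by_cases hα : α i = 0 <;> simp [coordProj, hα]

theorem coordProj_eq_of_add_eq (hn : 2 ≤ n) {α y d e : Pt k} (hy : y ∈ unitCube k)
    (hd : IsDigit n d) (he : IsDigit n e)
    (h : coordProj α (y + d) = (n : ℝ) • ((n : ℝ) - 1)⁻¹ • coordProj α e) :
    coordProj α d = coordProj α e := by
  funext i
  have hi := congrFun h i
  simp only [coordProj_apply, Pi.add_apply, Pi.smul_apply, smul_eq_mul] at hi ⊢
  split_ifs at hi ⊢ with hα
  · rfl
  obtain ⟨m, hm, hdm⟩ := hd i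
  obtain ⟨m₀, hm₀, hem⟩ := he i
  rw [hdm, hem] at hi ⊢
  exact congrArg _ (natCast_eq_of_add_eq_mul hn hm hm₀ (hy i) hi)

namespace IsFractalCube

variable {D K : Set (Pt k)}

theorem subset_unitCube (hn : 2 ≤ n) (hD : ∀ d ∈ D, IsDigit n d) (hK : IsFractalCube n D K) :
    K ⊆ unitCube k :=
  subset_of_smul_subset_add (Nat.one_lt_cast.mpr hn) hK.2.1.isBounded isClosed_unitCube
    ⟨0, fun _ => by simp⟩ hK.2.2.subset (unitCube_add_subset (by omega) hD)

theorem inv_sub_one_smul_mem (hn : 2 ≤ n) (hK : IsFractalCube n D K) {d : Pt k} (hd : d ∈ D) :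
    ((n : ℝ) - 1)⁻¹ • d ∈ K := by
  have hn1 : (1 : ℝ) < n := Nat.one_lt_cast.mpr hn
  refine singleton_subset_iff.mp <| subset_of_smul_subset_add hn1
    Bornology.isBounded_singleton hK.2.1.isClosed hK.1 (E := {d}) ?_ ?_
  · rw [smul_set_singleton, singleton_add_singleton, smul_inv_sub_one_smul hn1.ne']
  · exact hK.2.2 ▸ add_subset_add_left (singleton_subset_iff.mpr hd)

theorem unique (hn : 2 ≤ n) {X : Set (Pt k)} (hX : IsFractalCube n D X)
    (hK : IsFractalCube n D K) : X = K :=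
  eq_of_smul_eq_add (Nat.one_lt_cast.mpr hn) hX.2.1 hX.1 hK.2.1 hK.1 hX.2.2 hK.2.2

theorem smul_inter_coordProj_preimage_subset (hn : 2 ≤ n) (hD : ∀ d ∈ D, IsDigit n d)
    (hK : IsFractalCube n D K) (α : Pt k) {e : Pt k} (he : e ∈ D) :
    (n : ℝ) • (K ∩ coordProj α ⁻¹' {((n : ℝ) - 1)⁻¹ • coordProj α e}) ⊆
      K ∩ coordProj α ⁻¹' {((n : ℝ) - 1)⁻¹ • coordProj α e} +
        coordProj α ⁻¹' {coordProj α e} ∩ D := by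
  rintro _ ⟨x, ⟨hxK, hx⟩, rfl⟩
  obtain ⟨y, hy, d, hd, hyd⟩ := hK.2.2.subset (smul_mem_smul_set hxK)
  simp only [mem_preimage, mem_singleton_iff] at hx hyd
  have hpyd : coordProj α (y + d) = (n : ℝ) • ((n : ℝ) - 1)⁻¹ • coordProj α e := by
    rw [hyd, map_smul, hx]
  have hpd := coordProj_eq_of_add_eq hn (hK.subset_unitCube hn hD hy) (hD d hd) (hD e he) hpyd
  have hpy : coordProj α y = ((n : ℝ) - 1)⁻¹ • coordProj α e := by
    rw [map_add, hpd, smul_inv_sub_one_smul (Nat.one_lt_cast.mpr hn).ne'] at hpyd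
    exact add_right_cancel hpyd
  exact ⟨y, ⟨hy, hpy⟩, d, ⟨hpd, hd⟩, hyd⟩

theorem inter_coordProj_preimage (hn : 2 ≤ n) (hD : ∀ d ∈ D, IsDigit n d)
    (hK : IsFractalCube n D K) (α : Pt k) {e : Pt k} (he : e ∈ D) :
    IsFractalCube n (coordProj α ⁻¹' {coordProj α e} ∩ D)
      (K ∩ coordProj α ⁻¹' {((n : ℝ) - 1)⁻¹ • coordProj α e}) := by
  have hn1 : (1 : ℝ) < n := Nat.one_lt_cast.mpr hn
  refine ⟨⟨_, hK.inv_sub_one_smul_mem hn he, by simp [map_smul]⟩,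
    hK.2.1.inter_right (isClosed_singleton.preimage (coordProj α).continuous_of_finiteDimensional),
    (hK.smul_inter_coordProj_preimage_subset hn hD α he).antisymm ?_⟩
  exact inter_preimage_add_subset _ (by positivity) hK.2.2.symm.subset
    (smul_inv_sub_one_smul hn1.ne' _)

end IsFractalCube

end FractalCube

theorem section_is_fractalCube_general {k n : ℕ} (hn : 2 ≤ n)
    (D K : Set (Pt k)) (hD : IsDigitSet n D) (hK : IsFractalCube n D K)
    (α : Pt k)
    (pr : Pt k → Pt k) (hpr : pr = fun x i => if α i = 0 then 0 else x i)
    (d0 : Pt k) (hd0 : d0 ∈ pr '' D) :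
    IsFractalCube n (pr ⁻¹' {d0} ∩ D) (K ∩ pr ⁻¹' {((n : ℝ) - 1)⁻¹ • d0}) ∧
    ∀ X : Set (Pt k), IsFractalCube n (pr ⁻¹' {d0} ∩ D) X →
      X = K ∩ pr ⁻¹' {((n : ℝ) - 1)⁻¹ • d0} := by
  obtain rfl : pr = coordProj α :=
    hpr ▸ funext fun x => funext fun i => (coordProj_apply α x i).symm
  obtain ⟨e, he, rfl⟩ := hd0
  have hsection := hK.inter_coordProj_preimage hn hD.2 α he
  exact ⟨hsection, fun X hX => hX.unique hn hsection⟩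

/-- the section `K ∩ (pr'_α)⁻¹(s̄₀)`, with `s̄₀ = d̄₀/(n−1)`,
is the fractal cube with digit set `D̄₀ = (pr'_α)⁻¹(d̄₀) ∩ D`. -/
theorem section_is_fractalCube {k n : ℕ} (hk : 1 ≤ k) (hn : 2 ≤ n)
    (D K : Set (Pt k)) (hD : IsDigitSet n D) (hK : IsFractalCube n D K)
    (α : Pt k) (hα : IsAk α)
    (pr : Pt k → Pt k) (hpr : pr = fun x i => if α i = 0 then 0 else x i)
    (d0 : Pt k) (hd0 : d0 ∈ pr '' D) :
    IsFractalCube n (pr ⁻¹' {d0} ∩ D) (K ∩ pr ⁻¹' {((n : ℝ) - 1)⁻¹ • d0}) ∧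
    ∀ X : Set (Pt k), IsFractalCube n (pr ⁻¹' {d0} ∩ D) X →
      X = K ∩ pr ⁻¹' {((n : ℝ) - 1)⁻¹ • d0} :=
  section_is_fractalCube_general hn D K hD hK α pr hpr d0 hd0
end
end

section
/- Let K_1, K_2 be fractal k-cubes of order n with digit sets D_1, D_2, let α ∈ A_k, and suppose D̂_1 := D_1 ∩ (n−1)P_α and D̂_2 := (D_2 ∩ (n−1)P_{−α}) + (n−1)α are both nonempty. Then F_α := K_1 ∩ (K_2 + α) equals K̂_1 ∩ K̂_2, where K̂_1, K̂_2 are the fractal k-cubes of order n with digit sets D̂_1 and D̂_2 respectively. -/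
open Set Pointwise MeasureTheory

noncomputable section

/-!
A bounded `K` with `c • K ⊆ K + D` lies in every closed, bounded, nonempty `L` with
`L + D ⊆ c • L`: peeling off one digit at a time, each point of `K` is matched by a point of `L`
sharing its first `m` digits, at distance `O(c⁻ᵐ)`. This comparison principle pins down fractal
cubes.

Since `K₁ ⊆ P` and `K₂ + α ⊆ P + α`, we have `F_α = (K₁ ∩ P_α) ∩ ((K₂ ∩ P_{-α}) + α)`. For
`α ∈ A_k` the face `P_α` is an extreme subset of `P`, and `c • x = y + d` puts `x` in the open
segment from `y` to `d / (c - 1)`. So a point of `K ∩ P_α` only ever uses digits from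
`(c - 1) • P_α`, and the comparison principle, applied both ways, gives `K̂₁ = K₁ ∩ P_α` and
`K̂₂ - α = K₂ ∩ P_{-α}`.
-/

section SelfSimilar

open Bornology Metric

variable {E : Type*} [NormedAddCommGroup E] [NormedSpace ℝ E] {c : ℝ} {A B D K L : Set E}

theorem subset_of_smul_subset_add_s7 (hc : 1 < c) (hK : IsBounded K) (hKD : c • K ⊆ K + D)
    (hL : IsClosed L) (hLb : IsBounded L) (hLne : L.Nonempty) (hLD : L + D ⊆ c • L) :
    K ⊆ L := by
  obtain ⟨z, hz⟩ := hLne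
  set R := diam (K ∪ L)
  have hc0 : 0 < c := zero_lt_one.trans hc
  have approx : ∀ m : ℕ, ∀ x ∈ K, ∃ y ∈ L, dist x y ≤ R * c⁻¹ ^ m := by
    intro m
    induction m with
    | zero =>
      intro x hx
      exact ⟨z, hz, by simpa using dist_le_diam_of_mem (hK.union hLb) (Or.inl hx) (Or.inr hz)⟩
    | succ m ih =>
      intro x hx
      obtain ⟨x', hx', d, hd, hxd : x' + d = c • x⟩ := hKD (smul_mem_smul_set hx)
      obtain ⟨y', hy', hxy'⟩ := ih x' hx'
      obtain ⟨y, hy, hyd : c • y = y' + d⟩ := hLD (add_mem_add hy' hd)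
      refine ⟨y, hy, ?_⟩
      have hscale : c * dist x y = dist x' y' := by
        rw [← Real.norm_of_nonneg hc0.le, ← dist_smul₀, ← hxd, hyd, dist_add_right]
      rw [pow_succ, ← mul_assoc, ← div_eq_mul_inv, le_div_iff₀ hc0, mul_comm]
      exact hscale ▸ hxy'
  have hlim : Filter.Tendsto (fun m : ℕ => R * c⁻¹ ^ m) Filter.atTop (nhds 0) := by
    simpa using (tendsto_pow_atTop_nhds_zero_of_lt_one (inv_nonneg.2 hc0.le)
      (inv_lt_one_of_one_lt₀ hc)).const_mul R
  intro x hx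
  refine hL.closure_subset (Metric.mem_closure_iff.2 fun ε hε => ?_)
  obtain ⟨m, hm⟩ := (hlim.eventually (gt_mem_nhds hε)).exists
  obtain ⟨y, hy, hxy⟩ := approx m x hx
  exact ⟨y, hy, hxy.trans_lt hm⟩

theorem Convex.add_smul_sub_one_subset (hA : Convex ℝ A) (hc : 1 ≤ c) :
    A + (c - 1) • A ⊆ c • A := by
  simpa using (hA.add_smul zero_le_one (sub_nonneg.2 hc)).ge

theorem subset_of_smul_subset_add_of_convex (hc : 1 < c) (hK : IsBounded K)
    (hKD : c • K ⊆ K + D) (hA : Convex ℝ A) (hAc : IsClosed A) (hAb : IsBounded A)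
    (hAne : A.Nonempty) (hDA : D ⊆ (c - 1) • A) : K ⊆ A :=
  subset_of_smul_subset_add_s7 hc hK hKD hAc hAb hAne
    ((add_subset_add_left hDA).trans (hA.add_smul_sub_one_subset hc.le))

theorem IsExtreme.mem_of_smul_eq_add (hAB : IsExtreme ℝ A B) (hc : 1 < c) {x y d : E}
    (hx : x ∈ B) (hy : y ∈ A) (hd : d ∈ (c - 1) • A) (h : c • x = y + d) :
    y ∈ B ∧ d ∈ (c - 1) • B := by
  obtain ⟨a, ha, rfl⟩ := hd
  have hc0 : c ≠ 0 := (zero_lt_one.trans hc).ne'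
  have hseg : x ∈ openSegment ℝ y a := by
    refine ⟨c⁻¹, 1 - c⁻¹, inv_pos.2 (zero_lt_one.trans hc),
      sub_pos.2 (inv_lt_one_of_one_lt₀ hc), by ring, ?_⟩
    rw [← inv_smul_smul₀ hc0 x, h, smul_add, smul_smul]
    congr 2
    field_simp
  exact ⟨hAB.left_mem_of_mem_openSegment hy ha hx hseg,
    smul_mem_smul_set (hAB.right_mem_of_mem_openSegment hy ha hx hseg)⟩

theorem IsExtreme.smul_inter_subset_add_inter (hAB : IsExtreme ℝ A B) (hc : 1 < c)
    (hK : c • K = K + D) (hKA : K ⊆ A) (hDA : D ⊆ (c - 1) • A) :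
    c • (K ∩ B) ⊆ K ∩ B + D ∩ (c - 1) • B := by
  rintro _ ⟨x, ⟨hxK, hxB⟩, rfl⟩
  obtain ⟨y, hy, d, hd, hyd⟩ := hK ▸ smul_mem_smul_set (a := c) hxK
  obtain ⟨hyB, hdB⟩ := hAB.mem_of_smul_eq_add hc hxB (hKA hy) (hDA hd) hyd.symm
  exact ⟨y, ⟨hy, hyB⟩, d, ⟨hd, hdB⟩, hyd⟩

theorem IsExtreme.eq_inter_of_smul_eq_add (hAB : IsExtreme ℝ A B) (hB : Convex ℝ B)
    (hBc : IsCompact B) (hc : 1 < c) (hK : c • K = K + D) (hKc : IsCompact K)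
    (hKne : K.Nonempty) (hKA : K ⊆ A) (hDA : D ⊆ (c - 1) • A) {Kh : Set E}
    (hKh : c • Kh = Kh + D ∩ (c - 1) • B) (hKhc : IsCompact Kh) (hKhne : Kh.Nonempty) :
    Kh = K ∩ B := by
  have hBne : B.Nonempty := by
    obtain ⟨-, -, -, -, ⟨-, b, hb, -⟩, -⟩ := hKh ▸ hKhne.smul_set (a := c)
    exact ⟨b, hb⟩
  refine (subset_inter ?_ ?_).antisymm ?_
  · exact subset_of_smul_subset_add_s7 hc hKhc.isBounded
      (hKh.le.trans (add_subset_add_left inter_subset_left)) hKc.isClosed hKc.isBounded hKne hK.ge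
  · exact subset_of_smul_subset_add_of_convex hc hKhc.isBounded hKh.le hB hBc.isClosed
      hBc.isBounded hBne inter_subset_right
  · exact subset_of_smul_subset_add_s7 hc (hKc.isBounded.subset inter_subset_left)
      (hAB.smul_inter_subset_add_inter hc hK hKA hDA) hKhc.isClosed hKhc.isBounded hKhne hKh.ge

theorem smul_image_add_const (hK : c • K = K + D) (v : E) :
    c • ((· + v) '' K) = (· + v) '' K + (· + (c - 1) • v) '' D := by
  simp only [← add_singleton]
  rw [smul_add, hK, smul_set_singleton, add_add_add_comm, singleton_add_singleton, sub_smul,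
    one_smul, add_sub_cancel]

end SelfSimilar

section UnitCube

variable {k : ℕ}

theorem unitCube_eq_Icc : unitCube k = Icc 0 1 := by
  ext x
  simp [unitCube, Pi.le_def, forall_and]

theorem face_eq_inter_Icc (α : Pt k) : face α = Icc 0 1 ∩ Icc α (1 + α) := by
  rw [face, unitCube_eq_Icc, image_add_const_Icc, zero_add]

theorem convex_face (α : Pt k) : Convex ℝ (face α) :=
  face_eq_inter_Icc α ▸ (convex_Icc _ _).inter (convex_Icc _ _)

theorem isCompact_face (α : Pt k) : IsCompact (face α) :=
  face_eq_inter_Icc α ▸ isCompact_Icc.inter_right isClosed_Icc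

theorem IsAk.neg {α : Pt k} (hα : IsAk α) : IsAk (-α) := fun i => by
  rcases hα i with h | h | h <;> simp [h]

theorem isExtreme_face {α : Pt k} (hα : IsAk α) : IsExtreme ℝ (unitCube k) (face α) := by
  refine ⟨inter_subset_left, fun x hx y hy z hz ⟨a, b, ha, hb, hab, hxyz⟩ => ?_⟩
  simp only [face_eq_inter_Icc, unitCube_eq_Icc, mem_inter_iff, mem_Icc, Pi.le_def] at *
  refine ⟨hx, fun i => ?_, fun i => ?_⟩ <;>
  · have hzi : z i = a * x i + b * y i := by simp [← hxyz]
    have := hx.1 i; have := hx.2 i; have := hy.1 i; have := hy.2 i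
    have := hz.2.1 i; have := hz.2.2 i
    simp only [Pi.add_apply, Pi.one_apply, Pi.zero_apply] at *
    rcases hα i with h | h | h <;> nlinarith

theorem IsDigitSet.subset_smul_unitCube {n : ℕ} (hn : 2 ≤ n) {D : Set (Pt k)}
    (hD : IsDigitSet n D) : D ⊆ ((n : ℝ) - 1) • unitCube k := by
  have hn1 : (1 : ℝ) < n := by exact_mod_cast hn
  intro d hd
  rw [mem_smul_set_iff_inv_smul_mem₀ (sub_pos.2 hn1).ne']
  intro i
  obtain ⟨m, hm, hdi⟩ := hD.2 d hd i
  have hmn : (m : ℝ) ≤ n - 1 := by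
    rw [le_sub_iff_add_le]
    exact_mod_cast hm
  simp only [Pi.smul_apply, smul_eq_mul, hdi]
  exact ⟨by positivity, inv_mul_le_one_of_le₀ hmn (by linarith)⟩

theorem IsFractalCube.subset_unitCube_s7 {n : ℕ} (hn : 2 ≤ n) {D K : Set (Pt k)}
    (hD : IsDigitSet n D) (hK : IsFractalCube n D K) : K ⊆ unitCube k := by
  have hDP := hD.subset_smul_unitCube hn
  rw [unitCube_eq_Icc] at hDP ⊢
  exact subset_of_smul_subset_add_of_convex (by exact_mod_cast hn) hK.2.1.isBounded hK.2.2.le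
    (convex_Icc _ _) isClosed_Icc isCompact_Icc.isBounded (nonempty_Icc.2 zero_le_one) hDP

theorem interF_eq_inter_face {K1 K2 : Set (Pt k)} (hK1 : K1 ⊆ unitCube k)
    (hK2 : K2 ⊆ unitCube k) (α : Pt k) :
    interF K1 K2 α = K1 ∩ face α ∩ (· + α) '' (K2 ∩ face (-α)) := by
  ext x
  constructor
  · rintro ⟨hx, y, hy, rfl⟩
    exact ⟨⟨hx, hK1 hx, y, hK2 hy, rfl⟩, y, ⟨hy, hK2 hy, y + α, hK1 hx, by simp⟩, rfl⟩
  · rintro ⟨⟨hx, -⟩, y, ⟨hy, -⟩, rfl⟩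
    exact ⟨hx, y, hy, rfl⟩

end UnitCube

theorem interF_eq_inter_hat_general {k n : ℕ} (hn : 2 ≤ n)
    (D1 D2 K1 K2 : Set (Pt k)) (hD1 : IsDigitSet n D1) (hD2 : IsDigitSet n D2)
    (hK1 : IsFractalCube n D1 K1) (hK2 : IsFractalCube n D2 K2)
    (α : Pt k) (hα : IsAk α)
    (Dh1 Dh2 : Set (Pt k))
    (hDh1 : Dh1 = D1 ∩ ((n : ℝ) - 1) • face α)
    (hDh2 : Dh2 = (fun x => x + ((n : ℝ) - 1) • α) '' (D2 ∩ ((n : ℝ) - 1) • face (-α)))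
    (Kh1 Kh2 : Set (Pt k))
    (hKh1 : IsFractalCube n Dh1 Kh1) (hKh2 : IsFractalCube n Dh2 Kh2) :
    interF K1 K2 α = Kh1 ∩ Kh2 := by
  have hn1 : (1 : ℝ) < n := by exact_mod_cast hn
  have hK1P := hK1.subset_unitCube_s7 hn hD1
  have hK2P := hK2.subset_unitCube_s7 hn hD2
  have hKh1_eq : Kh1 = K1 ∩ face α :=
    (isExtreme_face hα).eq_inter_of_smul_eq_add (convex_face α) (isCompact_face α) hn1 hK1.2.2
      hK1.2.1 hK1.1 hK1P (hD1.subset_smul_unitCube hn) (hDh1 ▸ hKh1.2.2) hKh1.2.1 hKh1.1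
  have hKh2_eq : (· + -α) '' Kh2 = K2 ∩ face (-α) := by
    refine (isExtreme_face hα.neg).eq_inter_of_smul_eq_add (convex_face _) (isCompact_face _)
      hn1 hK2.2.2 hK2.2.1 hK2.1 hK2P (hD2.subset_smul_unitCube hn) ?_
      (hKh2.2.1.image (continuous_add_const _)) (hKh2.1.image _)
    rw [smul_image_add_const hKh2.2.2, hDh2, image_image]
    simp
  rw [interF_eq_inter_face hK1P hK2P, ← hKh1_eq, ← hKh2_eq, image_image]
  simp

/-- `F_α = K₁ ∩ (K₂ + α)` equals `K̂₁ ∩ K̂₂`, where `K̂₁, K̂₂` are the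
fractal cubes with digit sets `D̂₁ = D₁ ∩ (n−1)P_α` and
`D̂₂ = (D₂ ∩ (n−1)P_{−α}) + (n−1)α`. -/
theorem interF_eq_inter_hat {k n : ℕ} (hk : 1 ≤ k) (hn : 2 ≤ n)
    (D1 D2 K1 K2 : Set (Pt k)) (hD1 : IsDigitSet n D1) (hD2 : IsDigitSet n D2)
    (hK1 : IsFractalCube n D1 K1) (hK2 : IsFractalCube n D2 K2)
    (α : Pt k) (hα : IsAk α)
    (Dh1 Dh2 : Set (Pt k))
    (hDh1 : Dh1 = D1 ∩ ((n : ℝ) - 1) • face α)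
    (hDh2 : Dh2 = (fun x => x + ((n : ℝ) - 1) • α) '' (D2 ∩ ((n : ℝ) - 1) • face (-α)))
    (h1 : Dh1.Nonempty) (h2 : Dh2.Nonempty)
    (Kh1 Kh2 : Set (Pt k))
    (hKh1 : IsFractalCube n Dh1 Kh1) (hKh2 : IsFractalCube n Dh2 Kh2) :
    interF K1 K2 α = Kh1 ∩ Kh2 :=
  interF_eq_inter_hat_general hn D1 D2 K1 K2 hD1 hD2 hK1 hK2 α hα Dh1 Dh2 hDh1 hDh2 Kh1 Kh2 hKh1
    hKh2
end
end

section
/- Let K_1, K_2 be fractal k-cubes of order n with digit sets D_1, D_2, let α ∈ A_k, and suppose D̂_1 := D_1 ∩ (n−1)P_α and D̂_2 := (D_2 ∩ (n−1)P_{−α}) + (n−1)α are both nonempty; let K̂_1, K̂_2 be the fractal k-cubes with these digit sets. Then for every γ ∈ A_k complementary to α, i.e., supp(α) ∩ supp(γ) = ∅, one has F_{α+γ} = K̂_1 ∩ (K̂_2 + γ), where F_{α+γ} = K_1 ∩ (K_2 + α + γ). -/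
open Set Pointwise MeasureTheory

noncomputable section

namespace FCAux

variable {k n : ℕ}

lemma isClosed_unitCube : IsClosed (unitCube k) := by
  have h : unitCube k = Set.pi Set.univ (fun _ : Fin k => Set.Icc (0:ℝ) 1) := by
    ext x; simp [unitCube, Set.mem_univ_pi, Set.mem_Icc, Pi.le_def, forall_and]
  rw [h]
  exact isClosed_set_pi fun a _ => isClosed_Icc

lemma isClosed_face (α : Pt k) : IsClosed (face α) := by
  have himg : (fun x : Pt k => x + α) '' unitCube k = (fun x => x - α) ⁻¹' unitCube k := by
    ext x
    constructor
    · rintro ⟨y, hy, rfl⟩; simpa using hy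
    · intro hx; exact ⟨x - α, hx, sub_add_cancel x α⟩
  unfold face
  rw [himg]
  exact isClosed_unitCube.inter (isClosed_unitCube.preimage (by continuity))

lemma mem_face_iff {α : Pt k} (hα : IsAk α) {x : Pt k} :
    x ∈ face α ↔ ∀ i, 0 ≤ x i ∧ x i ≤ 1 ∧ (α i = 1 → x i = 1) ∧ (α i = -1 → x i = 0) := by
  constructor
  · rintro ⟨hx, y, hy, rfl⟩ i
    have hxi1 : (0:ℝ) ≤ y i + α i := (hx i).1
    have hxi2 : y i + α i ≤ 1 := (hx i).2
    have hyi1 : (0:ℝ) ≤ y i := (hy i).1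
    have hyi2 : y i ≤ 1 := (hy i).2
    refine ⟨hxi1, hxi2, fun h => ?_, fun h => ?_⟩
    · show y i + α i = 1
      rw [h]; linarith
    · show y i + α i = 0
      rw [h]; linarith
  · intro h
    refine ⟨fun i => ⟨(h i).1, (h i).2.1⟩, x - α, fun i => ?_, sub_add_cancel x α⟩
    obtain ⟨h1, h2, h3, h4⟩ := h i
    rcases hα i with hh | hh | hh
    · have := h4 hh
      simp only [Pi.sub_apply, hh, this]
      norm_num
    · simp only [Pi.sub_apply, hh]
      constructor <;> linarith
    · have := h3 hh
      simp only [Pi.sub_apply, hh, this]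
      norm_num

lemma mem_smul_face_iff (hn : 2 ≤ n) {α : Pt k} (hα : IsAk α) {x : Pt k} :
    x ∈ ((n : ℝ) - 1) • face α ↔
      ∀ i, 0 ≤ x i ∧ x i ≤ (n:ℝ) - 1 ∧ (α i = 1 → x i = (n:ℝ) - 1) ∧ (α i = -1 → x i = 0) := by
  have hn2 : (2:ℝ) ≤ (n:ℝ) := by exact_mod_cast hn
  have hc : (0:ℝ) < (n:ℝ) - 1 := by linarith
  have hcne : ((n:ℝ) - 1) ≠ 0 := ne_of_gt hc
  rw [Set.mem_smul_set_iff_inv_smul_mem₀ hcne, mem_face_iff hα]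
  refine forall_congr' fun i => ?_
  have happ : (((n:ℝ) - 1)⁻¹ • x) i = x i / ((n:ℝ) - 1) := by
    simp [div_eq_inv_mul]
  rw [happ]
  constructor
  · rintro ⟨h1, h2, h3, h4⟩
    refine ⟨?_, ?_, fun hh => ?_, fun hh => ?_⟩
    · have := (le_div_iff₀ hc).mp h1; linarith
    · have := (div_le_one hc).mp h2; linarith
    · have := h3 hh
      field_simp at this
      linarith [this]
    · have := h4 hh
      rcases div_eq_zero_iff.mp this with h | h
      · exact h
      · exact absurd h hcne
  · rintro ⟨h1, h2, h3, h4⟩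
    refine ⟨div_nonneg h1 hc.le, (div_le_one hc).mpr h2, fun hh => ?_, fun hh => ?_⟩
    · rw [h3 hh]; exact div_self hcne
    · rw [h4 hh]; exact zero_div _

lemma digit_bounds (hn : 2 ≤ n) {d : Pt k} (hd : IsDigit n d) (i : Fin k) :
    0 ≤ d i ∧ d i ≤ (n:ℝ) - 1 := by
  obtain ⟨m, hm, he⟩ := hd i
  have h1 : (m:ℝ) + 1 ≤ (n:ℝ) := by exact_mod_cast Nat.succ_le_of_lt hm
  constructor
  · rw [he]; exact Nat.cast_nonneg m
  · rw [he]; linarith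


lemma fractal_subset_unitCube (hn : 2 ≤ n) {D K : Set (Pt k)}
    (hDd : ∀ d ∈ D, IsDigit n d) (hK : IsFractalCube n D K) : K ⊆ unitCube k := by
  obtain ⟨hne, hcpt, heq⟩ := hK
  have hn2 : (2:ℝ) ≤ (n:ℝ) := by exact_mod_cast hn
  intro x hx i
  have hcont : ContinuousOn (fun y : Pt k => y i) K := (continuous_apply i).continuousOn
  constructor
  · obtain ⟨z, hz, hzmin⟩ := hcpt.exists_isMinOn hne hcont
    have h1 : (n:ℝ) • z ∈ K + D := heq ▸ smul_mem_smul_set hz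
    obtain ⟨y, hy, d, hd, hyd⟩ := Set.mem_add.mp h1
    have hco : y i + d i = (n:ℝ) * z i := by
      have := congrFun hyd i
      simpa [Pi.add_apply, Pi.smul_apply] using this
    have hdb := digit_bounds hn (hDd d hd) i
    have hyz : z i ≤ y i := hzmin hy
    have hz0 : 0 ≤ z i := by nlinarith
    exact le_trans hz0 (hzmin hx)
  · obtain ⟨z, hz, hzmax⟩ := hcpt.exists_isMaxOn hne hcont
    have h1 : (n:ℝ) • z ∈ K + D := heq ▸ smul_mem_smul_set hz
    obtain ⟨y, hy, d, hd, hyd⟩ := Set.mem_add.mp h1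
    have hco : y i + d i = (n:ℝ) * z i := by
      have := congrFun hyd i
      simpa [Pi.add_apply, Pi.smul_apply] using this
    have hdb := digit_bounds hn (hDd d hd) i
    have hyz : y i ≤ z i := hzmax hy
    have hz1 : z i ≤ 1 := by nlinarith
    exact le_trans (hzmax hx) hz1

private lemma contract_step (hn : 2 ≤ n) {D S T : Set (Pt k)}
    (hSeq : (n : ℝ) • S = S + D) (hTeq : (n : ℝ) • T = T + D)
    (hTc : IsCompact T) (hTne : T.Nonempty) :
    ∀ x ∈ S, EMetric.infEdist x T ≤ (n : ENNReal)⁻¹ * EMetric.hausdorffEdist S T := by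
  have hnR : (0:ℝ) < (n:ℝ) := by exact_mod_cast (by omega : 0 < n)
  have hn0 : (n:ℝ) ≠ 0 := ne_of_gt hnR
  intro x hx
  have h1 : (n:ℝ) • x ∈ S + D := hSeq ▸ smul_mem_smul_set hx
  obtain ⟨a, ha, d, hd, had⟩ := Set.mem_add.mp h1
  obtain ⟨b, hb, hmin⟩ := hTc.exists_infEdist_eq_edist hTne a
  have h2 : b + d ∈ (n:ℝ) • T := hTeq ▸ Set.add_mem_add hb hd
  obtain ⟨b', hb', hbeq⟩ := Set.mem_smul_set.mp h2
  have hx' : x = (n:ℝ)⁻¹ • (a + d) := by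
    rw [had, inv_smul_smul₀ hn0]
  have hb'' : b' = (n:ℝ)⁻¹ • (b + d) := by
    rw [← hbeq, inv_smul_smul₀ hn0]
  have hdist : dist x b' = (n:ℝ)⁻¹ * dist a b := by
    rw [hx', hb'', dist_smul₀]
    have : dist (a + d) (b + d) = dist a b := dist_add_right a b d
    rw [this, Real.norm_eq_abs, abs_of_nonneg (by positivity)]
  have hedist : edist x b' = (n : ENNReal)⁻¹ * edist a b := by
    rw [edist_dist, edist_dist, hdist, ENNReal.ofReal_mul (by positivity)]
    congr 1
    rw [ENNReal.ofReal_inv_of_pos hnR, ENNReal.ofReal_natCast]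
  calc EMetric.infEdist x T ≤ edist x b' := EMetric.infEdist_le_edist_of_mem hb'
  _ = (n : ENNReal)⁻¹ * edist a b := hedist
  _ = (n : ENNReal)⁻¹ * EMetric.infEdist a T := congrArg (fun t => (n : ENNReal)⁻¹ * t) hmin.symm
  _ ≤ (n : ENNReal)⁻¹ * EMetric.hausdorffEdist S T := by
      exact mul_le_mul_right (EMetric.infEdist_le_hausdorffEdist_of_mem ha) _

lemma fractal_unique (hn : 2 ≤ n) {D A B : Set (Pt k)}
    (hA : IsFractalCube n D A) (hB : IsFractalCube n D B) : A = B := by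
  obtain ⟨hAne, hAc, hAeq⟩ := hA
  obtain ⟨hBne, hBc, hBeq⟩ := hB
  set r := EMetric.hausdorffEdist A B with hr
  have hrtop : r ≠ ⊤ := Metric.hausdorffEdist_ne_top_of_nonempty_of_bounded hAne hBne
    hAc.isBounded hBc.isBounded
  have hle : r ≤ (n : ENNReal)⁻¹ * r := by
    apply EMetric.hausdorffEdist_le_of_infEdist
    · exact fun x hx => contract_step hn hAeq hBeq hBc hBne x hx
    · intro x hx
      have := contract_step hn hBeq hAeq hAc hAne x hx
      have hc : EMetric.hausdorffEdist B A = EMetric.hausdorffEdist A B := EMetric.hausdorffEdist_comm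
      rwa [hc] at this
  have hr0 : r = 0 := by
    by_contra h0
    have hn1 : (n : ENNReal)⁻¹ < 1 := by
      rw [ENNReal.inv_lt_one]
      exact_mod_cast lt_of_lt_of_le one_lt_two hn
    have : (n : ENNReal)⁻¹ * r < 1 * r := by
      exact ENNReal.mul_lt_mul_left h0 hrtop hn1
    rw [one_mul] at this
    exact absurd (lt_of_le_of_lt hle this) (lt_irrefl r)
  exact (EMetric.hausdorffEdist_zero_iff_eq_of_closed hAc.isClosed hBc.isClosed).mp hr0

lemma fixed_point_mem (hn : 2 ≤ n) {D K : Set (Pt k)} (hK : IsFractalCube n D K)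
    {d : Pt k} (hd : d ∈ D) : ((n:ℝ) - 1)⁻¹ • d ∈ K := by
  obtain ⟨⟨y0, hy0⟩, hc, heq⟩ := hK
  have hn2 : (2:ℝ) ≤ (n:ℝ) := by exact_mod_cast hn
  have hn0 : (n:ℝ) ≠ 0 := by linarith
  have hc1 : ((n:ℝ) - 1) ≠ 0 := by intro h; rw [sub_eq_zero] at h; linarith [h]
  set x : Pt k := ((n:ℝ) - 1)⁻¹ • d with hxdef
  have hxd : x + d = (n:ℝ) • x := by
    have hcoef : ((n:ℝ) - 1)⁻¹ + 1 = (n:ℝ) * ((n:ℝ) - 1)⁻¹ := by field_simp; ring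
    calc x + d = (((n:ℝ) - 1)⁻¹ + 1) • d := by rw [add_smul, one_smul]
    _ = ((n:ℝ) * ((n:ℝ) - 1)⁻¹) • d := by rw [hcoef]
    _ = (n:ℝ) • x := by rw [mul_smul]
  have hfix : (n:ℝ)⁻¹ • (x + d) = x := by rw [hxd, inv_smul_smul₀ hn0]
  have hinv : ∀ z ∈ K, (n:ℝ)⁻¹ • (z + d) ∈ K := by
    intro z hz
    have h1 : z + d ∈ (n:ℝ) • K := heq ▸ Set.add_mem_add hz hd
    obtain ⟨w, hw, hwe⟩ := Set.mem_smul_set.mp h1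
    have : (n:ℝ)⁻¹ • (z + d) = w := by rw [← hwe, inv_smul_smul₀ hn0]
    rwa [this]
  have hseq : ∀ p : ℕ, x + ((n:ℝ)⁻¹) ^ p • (y0 - x) ∈ K := by
    intro p
    induction p with
    | zero => simpa using hy0
    | succ p ih =>
      have hmem := hinv _ ih
      have he : (n:ℝ)⁻¹ • ((x + ((n:ℝ)⁻¹) ^ p • (y0 - x)) + d)
          = x + ((n:ℝ)⁻¹) ^ (p + 1) • (y0 - x) := by
        rw [add_right_comm, smul_add, hfix, smul_smul, ← pow_succ']
      rwa [he] at hmem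
  have hlim : Filter.Tendsto (fun p => x + ((n:ℝ)⁻¹) ^ p • (y0 - x))
      Filter.atTop (nhds x) := by
    have h0 : Filter.Tendsto (fun p : ℕ => ((n:ℝ)⁻¹) ^ p) Filter.atTop (nhds 0) := by
      refine tendsto_pow_atTop_nhds_zero_of_lt_one (by positivity) ?_
      exact inv_lt_one_of_one_lt₀ (by linarith)
    have h1 := h0.smul_const (y0 - x)
    rw [zero_smul] at h1
    simpa using tendsto_const_nhds.add h1
  exact hc.isClosed.mem_of_tendsto hlim (Filter.Eventually.of_forall hseq)


lemma inter_face_invariant (hn : 2 ≤ n) {D K : Set (Pt k)} (hDd : ∀ d ∈ D, IsDigit n d)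
    (hK : IsFractalCube n D K) {α : Pt k} (hα : IsAk α) :
    (n:ℝ) • (K ∩ face α) = (K ∩ face α) + (D ∩ ((n:ℝ) - 1) • face α) := by
  have hn2 : (2:ℝ) ≤ (n:ℝ) := by exact_mod_cast hn
  have hnpos : (0:ℝ) < (n:ℝ) := by linarith
  have hn0 : (n:ℝ) ≠ 0 := ne_of_gt hnpos
  have hKP : K ⊆ unitCube k := fractal_subset_unitCube hn hDd hK
  obtain ⟨hne, hcpt, heq⟩ := hK
  ext w
  constructor
  · intro hw
    obtain ⟨x, ⟨hxK, hxF⟩, rfl⟩ := Set.mem_smul_set.mp hw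
    have h1 : (n:ℝ) • x ∈ K + D := heq ▸ smul_mem_smul_set hxK
    obtain ⟨y, hy, d, hd, hyd⟩ := Set.mem_add.mp h1
    have hco : ∀ i, y i + d i = (n:ℝ) * x i := by
      intro i
      have := congrFun hyd i
      simpa [Pi.add_apply, Pi.smul_apply] using this
    have hfx := (mem_face_iff hα).mp hxF
    have hyF : y ∈ face α := by
      rw [mem_face_iff hα]
      intro i
      have hyP := hKP hy i
      have hdb := digit_bounds hn (hDd d hd) i
      obtain ⟨_, _, h3, h4⟩ := hfx i
      refine ⟨hyP.1, hyP.2, fun hh => ?_, fun hh => ?_⟩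
      · have := hco i; have := h3 hh; nlinarith [hyP.2, hdb.2]
      · have := hco i; have := h4 hh; nlinarith [hyP.1, hdb.1]
    have hdF : d ∈ ((n:ℝ) - 1) • face α := by
      rw [mem_smul_face_iff hn hα]
      intro i
      have hyP := hKP hy i
      have hdb := digit_bounds hn (hDd d hd) i
      obtain ⟨_, _, h3, h4⟩ := hfx i
      refine ⟨hdb.1, hdb.2, fun hh => ?_, fun hh => ?_⟩
      · have := hco i; have := h3 hh; nlinarith [hyP.2]
      · have := hco i; have := h4 hh; nlinarith [hyP.1]
    rw [← hyd]
    exact Set.add_mem_add ⟨hy, hyF⟩ ⟨hd, hdF⟩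
  · intro hw
    obtain ⟨y, ⟨hyK, hyF⟩, d, ⟨hdD, hdF⟩, hyd⟩ := Set.mem_add.mp hw
    have h1 : y + d ∈ (n:ℝ) • K := heq ▸ Set.add_mem_add hyK hdD
    obtain ⟨x, hxK, hxe⟩ := Set.mem_smul_set.mp h1
    have hco : ∀ i, (n:ℝ) * x i = y i + d i := by
      intro i
      have := congrFun hxe i
      simpa [Pi.add_apply, Pi.smul_apply] using this
    have hfy := (mem_face_iff hα).mp hyF
    have hfd := (mem_smul_face_iff hn hα).mp hdF
    have hxF : x ∈ face α := by
      rw [mem_face_iff hα]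
      intro i
      obtain ⟨hy1, hy2, hy3, hy4⟩ := hfy i
      obtain ⟨hd1, hd2, hd3, hd4⟩ := hfd i
      have hci := hco i
      refine ⟨?_, ?_, fun hh => ?_, fun hh => ?_⟩
      · nlinarith
      · nlinarith
      · have := hy3 hh; have := hd3 hh
        have : (n:ℝ) * x i = (n:ℝ) * 1 := by rw [hci]; rw [hy3 hh, hd3 hh]; ring
        exact mul_left_cancel₀ hn0 this
      · have : (n:ℝ) * x i = (n:ℝ) * 0 := by rw [hci, hy4 hh, hd4 hh]; ring
        exact mul_left_cancel₀ hn0 this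
    rw [← hyd, ← hxe]
    exact smul_mem_smul_set ⟨hxK, hxF⟩

lemma smul_translate {C D' : Set (Pt k)} {α : Pt k}
    (h : (n:ℝ) • C = C + D') :
    (n:ℝ) • ((fun x => x + α) '' C)
      = ((fun x => x + α) '' C) + ((fun x => x + ((n:ℝ) - 1) • α) '' D') := by
  have hsm : α + ((n:ℝ) - 1) • α = (n:ℝ) • α := by
    rw [sub_smul, one_smul]; abel
  ext w
  constructor
  · intro hw
    obtain ⟨u, hu, rfl⟩ := Set.mem_smul_set.mp hw
    obtain ⟨c, hc, rfl⟩ := hu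
    have h1 : (n:ℝ) • c ∈ C + D' := h ▸ smul_mem_smul_set hc
    obtain ⟨c', hc', d, hd, hcd⟩ := Set.mem_add.mp h1
    refine Set.mem_add.mpr ⟨c' + α, ⟨c', hc', rfl⟩, d + ((n:ℝ) - 1) • α, ⟨d, hd, rfl⟩, ?_⟩
    calc (c' + α) + (d + ((n:ℝ) - 1) • α) = (c' + d) + (α + ((n:ℝ) - 1) • α) := by abel
    _ = (n:ℝ) • c + (n:ℝ) • α := by rw [hcd, hsm]
    _ = (n:ℝ) • ((fun x => x + α) c) := by rw [← smul_add]
  · intro hw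
    obtain ⟨u, ⟨c, hc, rfl⟩, v, ⟨d, hd, rfl⟩, huv⟩ := Set.mem_add.mp hw
    have h1 : c + d ∈ (n:ℝ) • C := h ▸ Set.add_mem_add hc hd
    obtain ⟨c', hc', hce⟩ := Set.mem_smul_set.mp h1
    refine Set.mem_smul_set.mpr ⟨c' + α, ⟨c', hc', rfl⟩, ?_⟩
    rw [← huv]
    calc (n:ℝ) • (c' + α) = (n:ℝ) • c' + (n:ℝ) • α := smul_add _ _ _
    _ = (c + d) + (α + ((n:ℝ) - 1) • α) := by rw [hce, hsm]
    _ = (c + α) + (d + ((n:ℝ) - 1) • α) := by abel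

end FCAux

/-- for every `γ ∈ A_k` complementary to `α`,
`F_{α+γ} = K̂₁ ∩ (K̂₂ + γ)`. -/
theorem interF_add_complementary {k n : ℕ} (hk : 1 ≤ k) (hn : 2 ≤ n)
    (D1 D2 K1 K2 : Set (Pt k)) (hD1 : IsDigitSet n D1) (hD2 : IsDigitSet n D2)
    (hK1 : IsFractalCube n D1 K1) (hK2 : IsFractalCube n D2 K2)
    (α : Pt k) (hα : IsAk α)
    (Dh1 Dh2 : Set (Pt k))
    (hDh1 : Dh1 = D1 ∩ ((n : ℝ) - 1) • face α)
    (hDh2 : Dh2 = (fun x => x + ((n : ℝ) - 1) • α) '' (D2 ∩ ((n : ℝ) - 1) • face (-α)))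
    (h1 : Dh1.Nonempty) (h2 : Dh2.Nonempty)
    (Kh1 Kh2 : Set (Pt k))
    (hKh1 : IsFractalCube n Dh1 Kh1) (hKh2 : IsFractalCube n Dh2 Kh2) :
    ∀ γ : Pt k, IsAk γ → (∀ i, α i = 0 ∨ γ i = 0) →
      interF K1 K2 (α + γ) = Kh1 ∩ ((fun x => x + γ) '' Kh2) := by
  intro γ hγ hcompl
  have hn2 : (2:ℝ) ≤ (n:ℝ) := by exact_mod_cast hn
  have hc1 : ((n:ℝ) - 1) ≠ 0 := by
    intro h; rw [sub_eq_zero] at h; linarith [h]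
  have hαneg : IsAk (-α) := by
    intro i
    rcases hα i with h | h | h
    · right; right; simp [Pi.neg_apply, h]
    · right; left; simp [Pi.neg_apply, h]
    · left; simp [Pi.neg_apply, h]
  have hKP1 := FCAux.fractal_subset_unitCube hn hD1.2 hK1
  have hKP2 := FCAux.fractal_subset_unitCube hn hD2.2 hK2
  -- identify Kh1
  obtain ⟨d1, hd1⟩ := h1
  rw [hDh1] at hd1
  have hC1ne : (K1 ∩ face α).Nonempty := by
    refine ⟨((n:ℝ) - 1)⁻¹ • d1, FCAux.fixed_point_mem hn hK1 hd1.1, ?_⟩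
    exact (Set.mem_smul_set_iff_inv_smul_mem₀ hc1 _ _).mp hd1.2
  have hC1 : IsFractalCube n Dh1 (K1 ∩ face α) :=
    ⟨hC1ne, hK1.2.1.inter_right (FCAux.isClosed_face α), by
      rw [hDh1]; exact FCAux.inter_face_invariant hn hD1.2 hK1 hα⟩
  have hKh1eq : Kh1 = K1 ∩ face α := FCAux.fractal_unique hn hKh1 hC1
  -- identify Kh2
  obtain ⟨d2', hd2'⟩ := h2
  rw [hDh2] at hd2'
  obtain ⟨d2, hd2, _⟩ := hd2'
  have hC2ne : (K2 ∩ face (-α)).Nonempty := by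
    refine ⟨((n:ℝ) - 1)⁻¹ • d2, FCAux.fixed_point_mem hn hK2 hd2.1, ?_⟩
    exact (Set.mem_smul_set_iff_inv_smul_mem₀ hc1 _ _).mp hd2.2
  have hcont : Continuous (fun x : Pt k => x + α) := by continuity
  have hB : IsFractalCube n Dh2 ((fun x => x + α) '' (K2 ∩ face (-α))) := by
    refine ⟨hC2ne.image _,
      (hK2.2.1.inter_right (FCAux.isClosed_face (-α))).image hcont, ?_⟩
    rw [hDh2]
    exact FCAux.smul_translate (FCAux.inter_face_invariant hn hD2.2 hK2 hαneg)
  have hKh2eq : Kh2 = (fun x => x + α) '' (K2 ∩ face (-α)) :=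
    FCAux.fractal_unique hn hKh2 hB
  rw [hKh1eq, hKh2eq]
  ext x
  unfold interF
  simp only [Set.mem_inter_iff, Set.mem_image]
  constructor
  · rintro ⟨hx1, z, hz2, rfl⟩
    have hzP := hKP2 hz2
    have hxP := hKP1 hx1
    have key : ∀ i, 0 ≤ z i ∧ z i ≤ 1 ∧ 0 ≤ z i + (α i + γ i) ∧ z i + (α i + γ i) ≤ 1 :=
      fun i => ⟨(hzP i).1, (hzP i).2, (hxP i).1, (hxP i).2⟩
    have hzF : z ∈ face (-α) := by
      rw [FCAux.mem_face_iff hαneg]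
      intro i
      obtain ⟨k1, k2, k3, k4⟩ := key i
      refine ⟨k1, k2, fun hh => ?_, fun hh => ?_⟩
      · have hai : α i = -1 := by
          have h' : -(α i) = 1 := hh
          linarith
        have hgi : γ i = 0 := by
          rcases hcompl i with h | h
          · rw [h] at hai; norm_num at hai
          · exact h
        rw [hai, hgi] at k3 k4
        linarith
      · have hai : α i = 1 := by
          have h' : -(α i) = -1 := hh
          linarith
        have hgi : γ i = 0 := by
          rcases hcompl i with h | h
          · rw [h] at hai; norm_num at hai
          · exact h
        rw [hai, hgi] at k3 k4
        linarith
    have hxF : z + (α + γ) ∈ face α := by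
      rw [FCAux.mem_face_iff hα]
      intro i
      obtain ⟨k1, k2, k3, k4⟩ := key i
      simp only [Pi.add_apply]
      refine ⟨k3, k4, fun hh => ?_, fun hh => ?_⟩
      · have hgi : γ i = 0 := by
          rcases hcompl i with h | h
          · rw [h] at hh; norm_num at hh
          · exact h
        rw [hh, hgi] at k3 k4 ⊢
        linarith
      · have hgi : γ i = 0 := by
          rcases hcompl i with h | h
          · rw [h] at hh; norm_num at hh
          · exact h
        rw [hh, hgi] at k3 k4 ⊢
        linarith
    exact ⟨⟨hx1, hxF⟩, z + α, ⟨z, ⟨hz2, hzF⟩, rfl⟩, add_assoc z α γ⟩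
  · rintro ⟨⟨hx1, _⟩, y, ⟨z, ⟨hz2, _⟩, rfl⟩, rfl⟩
    exact ⟨hx1, z, hz2, (add_assoc z α γ).symm⟩
end
end

section
/- Let K_1, K_2 be fractal k-cubes of order n with digit sets D_1, D_2. Then for every α ∈ A_k, the family of intersections F_α = K_1 ∩ (K_2 + α) satisfies the system of equations F_α = ⋃_{β ∈ A_k, α ⊑ β} (F_β + G_{αβ})/n, where G_{αβ} = D_1 ∩ (D_2 + nα − β). -/
open Set Pointwise MeasureTheory

noncomputable section

/-! A point `x` lies in `F_α` iff `x ∈ K₁` and `x - α ∈ K₂`. Writing `n x = y₁ + d₁` and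
`n (x - α) = y₂ + d₂` by self-similarity, `x` lies in the piece `(F_β + G_{αβ})/n` with
`β = y₁ - y₂ = nα + d₂ - d₁`. Since both cubes lie in `[0,1]^k`, `β` is an integer vector in
`[-1,1]^k`, and as digits lie in `[0, n-1]`, each nonzero `α i = ±1` forces `β i = α i`. -/

section SelfSimilar

variable {k n : ℕ} {D K : Set (Pt k)}

lemma smul_mem_add_iff_mem (hn : (n : ℝ) ≠ 0) (hK : (n : ℝ) • K = K + D) {x : Pt k} :
    (n : ℝ) • x ∈ K + D ↔ x ∈ K := by
  rw [← hK, smul_mem_smul_set_iff₀ hn]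

lemma IsDigit.coord_nonneg {d : Pt k} (hd : IsDigit n d) (i : Fin k) : 0 ≤ d i := by
  obtain ⟨m, -, hm⟩ := hd i
  rw [hm]
  positivity

lemma IsDigit.coord_le_sub_one {d : Pt k} (hd : IsDigit n d) (i : Fin k) : d i ≤ n - 1 := by
  obtain ⟨m, hmn, hm⟩ := hd i
  have : (m : ℝ) + 1 ≤ n := by exact_mod_cast hmn
  linarith

variable (hn : 2 ≤ n) (hD : ∀ d ∈ D, IsDigit n d) (hK : IsFractalCube n D K)
include hn hD hK

/-- At a point `x₁` of `K` minimizing the `i`-th coordinate, `n x₁ = y + d` with `y ∈ K` and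
`d ≥ 0` gives `n x₁ i ≥ x₁ i`. -/
lemma IsFractalCube.coord_nonneg (i : Fin k) {x : Pt k} (hx : x ∈ K) : 0 ≤ x i := by
  obtain ⟨hne, hcpt, hself⟩ := hK
  obtain ⟨x₁, hx₁, hmin⟩ := hcpt.exists_isMinOn hne (continuous_apply i).continuousOn
  have hn0 : (n : ℝ) ≠ 0 := by positivity
  obtain ⟨y, hy, d, hd, hyd⟩ := (smul_mem_add_iff_mem hn0 hself).2 hx₁
  have hcoord : y i + d i = n * x₁ i := by simpa using congrFun hyd i
  have hn1 : (2 : ℝ) ≤ n := by exact_mod_cast hn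
  have := (hD d hd).coord_nonneg i
  have := isMinOn_iff.mp hmin y hy
  nlinarith [isMinOn_iff.mp hmin x hx]

lemma IsFractalCube.coord_le_one (i : Fin k) {x : Pt k} (hx : x ∈ K) : x i ≤ 1 := by
  obtain ⟨hne, hcpt, hself⟩ := hK
  obtain ⟨x₁, hx₁, hmax⟩ := hcpt.exists_isMaxOn hne (continuous_apply i).continuousOn
  have hn0 : (n : ℝ) ≠ 0 := by positivity
  obtain ⟨y, hy, d, hd, hyd⟩ := (smul_mem_add_iff_mem hn0 hself).2 hx₁
  have hcoord : y i + d i = n * x₁ i := by simpa using congrFun hyd i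
  have hn1 : (2 : ℝ) ≤ n := by exact_mod_cast hn
  have := (hD d hd).coord_le_sub_one i
  have := isMaxOn_iff.mp hmax y hy
  nlinarith [isMaxOn_iff.mp hmax x hx]

lemma IsFractalCube.subset_unitCube_s9 : K ⊆ unitCube k := fun _ hx i =>
  ⟨hK.coord_nonneg hn hD i hx, hK.coord_le_one hn hD i hx⟩

end SelfSimilar

lemma abs_sub_le_one_of_mem_unitCube {k : ℕ} {x y : Pt k} (hx : x ∈ unitCube k)
    (hy : y ∈ unitCube k) (i : Fin k) : |x i - y i| ≤ 1 := by
  have := hx i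
  have := hy i
  rw [abs_le]
  constructor <;> linarith

lemma offset_coord {n m₁ m₂ : ℕ} {a b : ℝ} (hm₁ : m₁ < n) (hm₂ : m₂ < n)
    (ha : a = -1 ∨ a = 0 ∨ a = 1) (hb : |b| ≤ 1) (h : b = n * a + m₂ - m₁) :
    (b = -1 ∨ b = 0 ∨ b = 1) ∧ (a ≠ 0 → b = a) := by
  have hm₁' : (m₁ : ℝ) + 1 ≤ n := by exact_mod_cast hm₁
  have hm₂' : (m₂ : ℝ) + 1 ≤ n := by exact_mod_cast hm₂
  have hm₁0 : (0 : ℝ) ≤ m₁ := m₁.cast_nonneg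
  have hm₂0 : (0 : ℝ) ≤ m₂ := m₂.cast_nonneg
  obtain ⟨hb₁, hb₂⟩ := abs_le.mp hb
  rcases ha with rfl | rfl | rfl
  · have : b = -1 := by linarith
    simp [this]
  · have hbZ : b = ((m₂ - m₁ : ℤ) : ℝ) := by push_cast; linarith
    rw [hbZ] at hb₁ hb₂ ⊢
    have hlo : (-1 : ℤ) ≤ m₂ - m₁ := by exact_mod_cast hb₁
    have hhi : (m₂ : ℤ) - m₁ ≤ 1 := by exact_mod_cast hb₂
    refine ⟨?_, fun h0 => absurd rfl h0⟩
    rcases (by omega : (m₂ : ℤ) - m₁ = -1 ∨ (m₂ : ℤ) - m₁ = 0 ∨ (m₂ : ℤ) - m₁ = 1)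
      with h | h | h <;> simp [h]
  · have : b = 1 := by linarith
    simp [this]

lemma offset_isAk_sqLe {k n : ℕ} {α β d₁ d₂ : Pt k} (hα : IsAk α) (hd₁ : IsDigit n d₁)
    (hd₂ : IsDigit n d₂) (hβ : ∀ i, |β i| ≤ 1) (h : β = (n : ℝ) • α + d₂ - d₁) :
    IsAk β ∧ SqLe α β := by
  have hcoord (i : Fin k) : (β i = -1 ∨ β i = 0 ∨ β i = 1) ∧ (α i ≠ 0 → β i = α i) := by
    obtain ⟨m₁, hm₁, e₁⟩ := hd₁ i
    obtain ⟨m₂, hm₂, e₂⟩ := hd₂ i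
    refine offset_coord hm₁ hm₂ (hα i) (hβ i) ?_
    simp [h, e₁, e₂]
  exact ⟨fun i => (hcoord i).1, fun i => (hcoord i).2⟩

section Pieces

variable {k n : ℕ} {D1 D2 K1 K2 : Set (Pt k)} {α : Pt k}

lemma smul_inv_interF_add_Gab_subset (hn : (n : ℝ) ≠ 0) (hK1 : (n : ℝ) • K1 = K1 + D1)
    (hK2 : (n : ℝ) • K2 = K2 + D2) (β : Pt k) :
    (n : ℝ)⁻¹ • (interF K1 K2 β + Gab n D1 D2 α β) ⊆ interF K1 K2 α := by
  intro x hx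
  rw [mem_smul_set_iff_inv_smul_mem₀ (inv_ne_zero hn), inv_inv] at hx
  obtain ⟨u, ⟨hu, u₂, hu₂, rfl⟩, v, ⟨hv, e, he, rfl⟩, hx⟩ := hx
  dsimp only at hu hv hx
  refine ⟨(smul_mem_add_iff_mem hn hK1).1 ⟨_, hu, _, hv, hx⟩, x - α, ?_, sub_add_cancel x α⟩
  refine (smul_mem_add_iff_mem hn hK2).1 ⟨u₂, hu₂, e, he, ?_⟩
  rw [smul_sub, ← hx]
  module

lemma interF_subset_iUnion (hn : 2 ≤ n) (hD1 : ∀ d ∈ D1, IsDigit n d)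
    (hD2 : ∀ d ∈ D2, IsDigit n d) (hK1 : IsFractalCube n D1 K1) (hK2 : IsFractalCube n D2 K2)
    (hα : IsAk α) :
    interF K1 K2 α ⊆ ⋃ β ∈ {β : Pt k | IsAk β ∧ SqLe α β},
      (n : ℝ)⁻¹ • (interF K1 K2 β + Gab n D1 D2 α β) := by
  rintro x ⟨hx, z, hz, rfl⟩
  have hn0 : (n : ℝ) ≠ 0 := by positivity
  obtain ⟨y₁, hy₁, d₁, hd₁, e₁⟩ := (smul_mem_add_iff_mem hn0 hK1.2.2).2 hx
  obtain ⟨y₂, hy₂, d₂, hd₂, e₂⟩ := (smul_mem_add_iff_mem hn0 hK2.2.2).2 hz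
  have hβ : y₁ - y₂ = (n : ℝ) • α + d₂ - d₁ := by
    rw [eq_sub_of_add_eq e₁, eq_sub_of_add_eq' e₂, smul_add]
    abel
  obtain ⟨hβA, hαβ⟩ := offset_isAk_sqLe hα (hD1 d₁ hd₁) (hD2 d₂ hd₂)
    (abs_sub_le_one_of_mem_unitCube (hK1.subset_unitCube_s9 hn hD1 hy₁)
      (hK2.subset_unitCube_s9 hn hD2 hy₂)) hβ
  refine mem_iUnion₂.2 ⟨y₁ - y₂, ⟨hβA, hαβ⟩, ?_⟩
  rw [mem_smul_set_iff_inv_smul_mem₀ (inv_ne_zero hn0), inv_inv, ← e₁]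
  refine add_mem_add ⟨hy₁, y₂, hy₂, add_sub_cancel y₂ y₁⟩ ⟨hd₁, d₂, hd₂, ?_⟩
  simp only [hβ]
  abel

end Pieces

theorem interF_system_general {k n : ℕ} (hn : 2 ≤ n)
    (D1 D2 K1 K2 : Set (Pt k)) (hD1 : IsDigitSet n D1) (hD2 : IsDigitSet n D2)
    (hK1 : IsFractalCube n D1 K1) (hK2 : IsFractalCube n D2 K2)
    (α : Pt k) (hα : IsAk α) :
    interF K1 K2 α =
      ⋃ β ∈ {β : Pt k | IsAk β ∧ SqLe α β},
        (n : ℝ)⁻¹ • (interF K1 K2 β + Gab n D1 D2 α β) := by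
  have hn0 : (n : ℝ) ≠ 0 := by positivity
  refine (interF_subset_iUnion hn hD1.2 hD2.2 hK1 hK2 hα).antisymm ?_
  exact iUnion₂_subset fun β _ => smul_inv_interF_add_Gab_subset hn0 hK1.2.2 hK2.2.2 β

/-- the intersection theorem:
`F_α = ⋃_{β ∈ A_k, α ⊑ β} (F_β + G_{αβ})/n`. -/
theorem interF_system {k n : ℕ} (hk : 1 ≤ k) (hn : 2 ≤ n)
    (D1 D2 K1 K2 : Set (Pt k)) (hD1 : IsDigitSet n D1) (hD2 : IsDigitSet n D2)
    (hK1 : IsFractalCube n D1 K1) (hK2 : IsFractalCube n D2 K2)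
    (α : Pt k) (hα : IsAk α) :
    interF K1 K2 α =
      ⋃ β ∈ {β : Pt k | IsAk β ∧ SqLe α β},
        (n : ℝ)⁻¹ • (interF K1 K2 β + Gab n D1 D2 α β) :=
  interF_system_general hn D1 D2 K1 K2 hD1 hD2 hK1 hK2 α hα
end
end

section
/- Let K_1, K_2 be fractal k-cubes of order n with digit sets D_1, D_2, and let α ∈ A_k be nonzero with α ≻ 0. Suppose #G_0 = #G_α = l ≥ 1 and #G_β ≤ l for every β ≻ 0, and set s = log_n l. Then the s-dimensional Hausdorff measure H^s(F_0) of F_0 = K_1 ∩ K_2 is infinite. -/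
open Set Pointwise MeasureTheory

noncomputable section

/-!
Since `α ≻ 0` there is a chain `0 = c₀ ⊏ c₁ ⊏ ⋯ ⊏ c_p = α` with digits `g_i ∈ G_{c_i c_{i+1}}`.
Enumerate `G₀` and `G_α` by `Fin l`. For each `j` and `θ ∈ [0, 1)`, reading the first `j` base-`l`
digits of `θ` through `G₀`, then `g₀ ⋯ g_{p-1}`, then the remaining digits of `θ` through `G_α` is
a path in the structure graph, hence the base-`n` expansion of a point of `F₀`. Pushing Lebesgue
measure forward along the branches `j < T` gives a measure of mass `T` on `F₀`.

A point within `n⁻ᵗ` of `x` has its first `t` digits in one of `5^k` lattice cells near `nᵗ x`.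
Since `c₁` is a nonzero vertex below `α`, `g₀ ∉ G_α`, so branches `j + p ≤ j' < t` never share
their first `t` digits: each cell is reached by at most `p` branches, each from a set of `θ` of
measure at most `l^{p-t} = l^p (n⁻ᵗ)^s`. For `t ≥ T` this bound does not depend on `T`, so the
mass distribution principle gives `T ≲ H^s(F₀)` for every `T`.
-/

open scoped ENNReal NNReal
open Filter Topology Metric

lemma Metric.subset_closedBall_of_ediam_le {X : Type*} [PseudoMetricSpace X] {A : Set X}
    {x : X} (hx : x ∈ A) {r : ℝ} (hr : 0 ≤ r) (hA : ediam A ≤ ENNReal.ofReal r) :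
    A ⊆ closedBall x r := fun a ha => by
  rw [mem_closedBall, ← ENNReal.ofReal_le_ofReal_iff hr, ← edist_dist]
  exact edist_le_of_ediam_le ha hx hA

lemma exists_pow_succ_lt_le {b δ : ℝ} (hb0 : 0 < b) (hb1 : b < 1) (hδ : 0 < δ) {t₀ : ℕ}
    (hδt₀ : δ ≤ b ^ t₀) : ∃ t, t₀ ≤ t ∧ b ^ (t + 1) < δ ∧ δ ≤ b ^ t := by
  have hbt₀ : 0 < b ^ t₀ := pow_pos hb0 t₀
  obtain ⟨u, hu1, hu2⟩ := exists_nat_pow_near_of_lt_one (div_pos hδ hbt₀)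
    ((div_le_one hbt₀).2 hδt₀) hb0 hb1
  rw [lt_div_iff₀ hbt₀, ← pow_add, add_right_comm] at hu1
  rw [div_le_iff₀ hbt₀, ← pow_add] at hu2
  exact ⟨u + t₀, Nat.le_add_left _ _, hu1, hu2⟩

theorem MeasureTheory.Measure.le_smul_hausdorffMeasure_of_closedBall_le {X : Type*}
    [MetricSpace X] [MeasurableSpace X] [BorelSpace X] (μ : Measure X) {b s : ℝ} (hb0 : 0 < b)
    (hb1 : b < 1) (hs : 0 ≤ s) {C : ℝ≥0∞} (hC0 : C ≠ 0) (hC : C ≠ ⊤) (t₀ : ℕ)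
    (hμ : ∀ x (t : ℕ), t₀ ≤ t →
      μ (closedBall x (b ^ t)) ≤ C * ENNReal.ofReal ((b ^ t) ^ s)) :
    μ ≤ (C * ENNReal.ofReal (b ^ (-s))) • μH[s] := by
  set c := C * ENNReal.ofReal (b ^ (-s))
  have hc0 : c ≠ 0 := mul_ne_zero hC0 (by simpa using Real.rpow_pos_of_pos hb0 (-s))
  have hc : c ≠ ⊤ := ENNReal.mul_ne_top hC ENNReal.ofReal_ne_top
  suffices h : c⁻¹ • μ ≤ μH[s] by
    refine Measure.le_iff'.2 fun E => ?_
    rw [Measure.smul_apply, smul_eq_mul, ← ENNReal.inv_mul_le_iff hc0 hc]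
    exact h E
  refine Measure.le_hausdorffMeasure s _ (ENNReal.ofReal (b ^ t₀)) (by simp [pow_pos hb0])
    fun A hA => ?_
  rw [Measure.smul_apply, smul_eq_mul, ENNReal.inv_mul_le_iff hc0 hc]
  rcases A.eq_empty_or_nonempty with rfl | ⟨x, hx⟩
  · simp
  have hball : ∀ t ≥ t₀, ediam A ≤ ENNReal.ofReal (b ^ t) →
      μ A ≤ C * ENNReal.ofReal ((b ^ t) ^ s) := fun t ht hAt =>
    (measure_mono (subset_closedBall_of_ediam_le hx (by positivity) hAt)).trans (hμ x t ht)
  obtain ⟨δ, hδ0, hδA⟩ : ∃ δ : ℝ, 0 ≤ δ ∧ ediam A = ENNReal.ofReal δ :=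
    ⟨_, ENNReal.toReal_nonneg,
      (ENNReal.ofReal_toReal (ne_top_of_le_ne_top ENNReal.ofReal_ne_top hA)).symm⟩
  rw [hδA] at hA hball ⊢
  rcases hδ0.eq_or_lt with rfl | hδ0
  -- `A` lies in every ball `closedBall x (b ^ t)`, so it has no mass when `s > 0`
  · rw [ENNReal.ofReal_zero]
    rcases hs.eq_or_lt with rfl | hs0
    · simpa [c] using hball t₀ le_rfl (by simp)
    have hlim : Tendsto (fun t : ℕ => C * ENNReal.ofReal ((b ^ s) ^ t)) atTop (𝓝 0) := by
      have := ENNReal.tendsto_ofReal (tendsto_pow_atTop_nhds_zero_of_lt_one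
        (by positivity) (Real.rpow_lt_one hb0.le hb1 hs0))
      simpa using ENNReal.Tendsto.const_mul this (Or.inr hC)
    refine (ge_of_tendsto hlim (eventually_atTop.2 ⟨t₀, fun t ht => ?_⟩)).trans zero_le
    rw [Real.rpow_pow_comm hb0.le]
    exact hball t ht (by simp)
  obtain ⟨t, ht₀, hδt, htδ⟩ := exists_pow_succ_lt_le hb0 hb1 hδ0
    ((ENNReal.ofReal_le_ofReal_iff (pow_pos hb0 t₀).le).1 hA)
  refine (hball t ht₀ (ENNReal.ofReal_le_ofReal htδ)).trans ?_
  rw [ENNReal.ofReal_rpow_of_nonneg hδ0.le hs, mul_assoc, ← ENNReal.ofReal_mul (by positivity)]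
  gcongr
  -- `b ^ (-s)` pays for rounding `diam A` up to the scale `b ^ t`
  calc (b ^ t) ^ s = b ^ (-s) * (b ^ (t + 1)) ^ s := by
        rw [pow_succ, Real.mul_rpow (by positivity) hb0.le, mul_left_comm, ← Real.rpow_add hb0,
          neg_add_cancel, Real.rpow_zero, mul_one]
    _ ≤ b ^ (-s) * δ ^ s := by gcongr

lemma Finset.card_le_of_forall_lt_add {s : Finset ℕ} {p : ℕ}
    (h : ∀ a ∈ s, ∀ b ∈ s, a ≤ b → b < a + p) : s.card ≤ p := by
  rcases s.eq_empty_or_nonempty with rfl | hs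
  · simp
  calc s.card ≤ (Finset.Ico (s.min' hs) (s.min' hs + p)).card :=
        Finset.card_le_card fun b hb => Finset.mem_Ico.2
          ⟨s.min'_le b hb, h _ (s.min'_mem hs) b hb (s.min'_le b hb)⟩
    _ = p := by simp

lemma ENNReal.eq_top_of_forall_natCast_le_mul {a x : ℝ≥0∞} (ha : a ≠ ⊤)
    (h : ∀ T : ℕ, (T : ℝ≥0∞) ≤ a * x) : x = ⊤ := by
  by_contra hx
  obtain ⟨T, hT⟩ := ENNReal.exists_nat_gt (ENNReal.mul_ne_top ha hx)
  exact (h T).not_gt hT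

lemma Set.exists_embedding_of_ncard_eq {α : Type*} {S : Set α} {l : ℕ} (hl : 0 < l)
    (h : S.ncard = l) : ∃ e : Fin l ↪ α, ∀ a, e a ∈ S := by
  have : Finite S := (Set.finite_of_ncard_pos (h ▸ hl)).to_subtype
  let e := Finite.equivFinOfCardEq ((Nat.card_coe_set_eq S).trans h)
  exact ⟨e.symm.toEmbedding.trans (Function.Embedding.subtype _), fun a => (e.symm a).2⟩

namespace FractalCube

variable {k n : ℕ}

def expansion (n : ℕ) (d : ℕ → Pt k) : Pt k := ∑' m, ((n : ℝ)⁻¹ ^ (m + 1)) • d m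

/-- `∑ m < t, n ^ (t - 1 - m) • d m`: the first `t` digits read as a base-`n` vector. -/
def digitsValue (n : ℕ) (d : ℕ → Pt k) : ℕ → Pt k
  | 0 => 0
  | t + 1 => (n : ℝ) • digitsValue n d t + d t

section Expansion

variable {d d' : ℕ → Pt k}

lemma norm_le_of_isDigit (hn : 0 < n) {x : Pt k} (hx : IsDigit n x) : ‖x‖ ≤ n - 1 := by
  have hn' : (1 : ℝ) ≤ n := by exact_mod_cast hn
  refine (pi_norm_le_iff_of_nonneg (by linarith)).2 fun i => ?_
  obtain ⟨m, hm, hx⟩ := hx i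
  rw [hx, Real.norm_natCast, le_sub_iff_add_le]
  exact_mod_cast hm

lemma hasSum_inv_pow_succ_mul (hn : 1 < n) :
    HasSum (fun m : ℕ => (n : ℝ)⁻¹ ^ (m + 1) * (n - 1)) 1 := by
  have hn' : (1 : ℝ) < n := by exact_mod_cast hn
  have hsub : (1 : ℝ) - (n : ℝ)⁻¹ = (n : ℝ)⁻¹ * (n - 1) := by field_simp
  have h := (hasSum_geometric_of_lt_one (by positivity) (inv_lt_one_of_one_lt₀ hn')).mul_right
    ((n : ℝ)⁻¹ * (n - 1))
  rw [← hsub, inv_mul_cancel₀ (sub_ne_zero.2 (inv_lt_one_of_one_lt₀ hn').ne')] at h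
  refine h.congr_fun fun m => ?_
  rw [hsub]
  ring

lemma summable_expansion (hn : 1 < n) (hd : ∀ m, IsDigit n (d m)) :
    Summable fun m => ((n : ℝ)⁻¹ ^ (m + 1)) • d m := by
  refine (hasSum_inv_pow_succ_mul hn).summable.of_norm_bounded fun m => ?_
  rw [norm_smul, norm_pow, norm_inv, Real.norm_natCast]
  gcongr
  exact norm_le_of_isDigit (by omega) (hd m)

lemma norm_expansion_le_one (hn : 1 < n) (hd : ∀ m, IsDigit n (d m)) :
    ‖expansion n d‖ ≤ 1 := by
  refine tsum_of_norm_bounded (hasSum_inv_pow_succ_mul hn) fun m => ?_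
  rw [norm_smul, norm_pow, norm_inv, Real.norm_natCast]
  gcongr
  exact norm_le_of_isDigit (by omega) (hd m)

lemma expansion_eq_inv_smul (hn : 1 < n) (hd : ∀ m, IsDigit n (d m)) :
    expansion n d = (n : ℝ)⁻¹ • (d 0 + expansion n fun m => d (m + 1)) := by
  rw [expansion, (summable_expansion hn hd).tsum_eq_zero_add, expansion, smul_add,
    ← tsum_const_smul'']
  simp only [zero_add, pow_one, smul_smul, ← pow_succ']

lemma expansion_eq_smul_digitsValue_add (hn : 1 < n) (hd : ∀ m, IsDigit n (d m)) (t : ℕ) :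
    expansion n d = (n : ℝ)⁻¹ ^ t • (digitsValue n d t + expansion n fun m => d (m + t)) := by
  induction t with
  | zero => simp [digitsValue]
  | succ t ih =>
    rw [ih, expansion_eq_inv_smul hn fun m => hd (m + t), digitsValue]
    simp only [zero_add, add_assoc, add_right_comm _ 1 t, smul_add, smul_smul, ← pow_succ,
      pow_succ', mul_assoc]
    congr 2
    field_simp

lemma exists_digitsValue_eq_natCast (hd : ∀ m, IsDigit n (d m)) (t : ℕ) :
    ∃ N : Fin k → ℕ, digitsValue n d t = fun i => (N i : ℝ) := by
  induction t with
  | zero => exact ⟨0, by ext; simp [digitsValue]⟩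
  | succ t ih =>
    obtain ⟨N, hN⟩ := ih
    choose a _ ha using hd t
    refine ⟨fun i => n * N i + a i, funext fun i => ?_⟩
    simp [digitsValue, hN, ha]

lemma eq_of_digitsValue_eq (hd : ∀ m, IsDigit n (d m)) (hd' : ∀ m, IsDigit n (d' m)) {t : ℕ}
    (h : digitsValue n d t = digitsValue n d' t) : ∀ m < t, d m = d' m := by
  induction t with
  | zero => simp
  | succ t ih =>
    obtain ⟨N, hN⟩ := exists_digitsValue_eq_natCast hd t
    obtain ⟨N', hN'⟩ := exists_digitsValue_eq_natCast hd' t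
    choose a ha ha' using hd t
    choose a' ha₁ ha₁' using hd' t
    have hi : ∀ i, n * N i + a i = n * N' i + a' i := fun i => by
      have := congrFun h i
      simp only [digitsValue, hN, hN', Pi.add_apply, Pi.smul_apply, smul_eq_mul, ha', ha₁'] at this
      exact_mod_cast this
    have hlast : ∀ i, a i = a' i := fun i => by
      simpa [Nat.mul_add_mod, Nat.mod_eq_of_lt (ha i), Nat.mod_eq_of_lt (ha₁ i)] using
        congrArg (· % n) (hi i)
    have hprev : digitsValue n d t = digitsValue n d' t := by
      rw [hN, hN']
      ext i
      have := hi i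
      rw [hlast i] at this
      simp [Nat.eq_of_mul_eq_mul_left (Nat.zero_lt_of_lt (ha i)) (by omega : n * N i = n * N' i)]
    intro m hm
    rcases Nat.lt_succ_iff_lt_or_eq.1 hm with hm | rfl
    · exact ih hprev m hm
    · ext i; rw [ha', ha₁', hlast i]

end Expansion

/-- The `(r + 1)`-st base-`l` digit of `θ` after the point. -/
def baseDigit (l : ℕ) [NeZero l] (r : ℕ) (θ : ℝ) : Fin l := Fin.ofNat l ⌊θ * l ^ (r + 1)⌋₊

section BaseDigits

variable {l : ℕ} [NeZero l]

lemma floor_mul_pow_succ (θ : ℝ) (r : ℕ) :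
    ⌊θ * l ^ (r + 1)⌋₊ = l * ⌊θ * l ^ r⌋₊ + baseDigit l r θ := by
  have hl : (l : ℝ) ≠ 0 := Nat.cast_ne_zero.2 (NeZero.ne l)
  rw [baseDigit, Fin.val_ofNat, ← mul_div_cancel_right₀ (θ * (l : ℝ) ^ r) hl, mul_assoc,
    ← pow_succ, Nat.floor_div_natCast, Nat.div_add_mod]

lemma floor_mul_pow_eq_of_baseDigit_eq {θ θ' : ℝ} (hθ : θ ∈ Ico (0 : ℝ) 1)
    (hθ' : θ' ∈ Ico (0 : ℝ) 1) {M : ℕ} (h : ∀ r < M, baseDigit l r θ = baseDigit l r θ') :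
    ⌊θ * l ^ M⌋₊ = ⌊θ' * l ^ M⌋₊ := by
  induction M with
  | zero => simp [Nat.floor_eq_zero.2 hθ.2, Nat.floor_eq_zero.2 hθ'.2]
  | succ M ih =>
    rw [floor_mul_pow_succ, floor_mul_pow_succ, ih fun r hr => h r (by omega), h M (by omega)]

lemma volume_baseDigit_cylinder_le (a : ℕ → Fin l) (M : ℕ) :
    volume {θ ∈ Ico (0 : ℝ) 1 | ∀ r < M, baseDigit l r θ = a r}
      ≤ ENNReal.ofReal ((l : ℝ)⁻¹ ^ M) := by
  rcases Set.eq_empty_or_nonempty {θ ∈ Ico (0 : ℝ) 1 | ∀ r < M, baseDigit l r θ = a r}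
    with h | ⟨θ₁, hθ₁, ha₁⟩
  · rw [h, measure_empty]
    exact zero_le
  have hL : (0 : ℝ) < (l : ℝ) ^ M := pow_pos (Nat.cast_pos.2 (Nat.pos_of_neZero l)) M
  set N := ⌊θ₁ * l ^ M⌋₊
  have hsub : {θ ∈ Ico (0 : ℝ) 1 | ∀ r < M, baseDigit l r θ = a r}
      ⊆ Ico ((N : ℝ) / l ^ M) ((N + 1) / l ^ M) := by
    rintro θ ⟨hθ, ha⟩
    have hN := (Nat.floor_eq_iff (by have := hθ.1; positivity)).1
      (floor_mul_pow_eq_of_baseDigit_eq hθ hθ₁ fun r hr => (ha r hr).trans (ha₁ r hr).symm)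
    rw [mem_Ico, div_le_iff₀ hL, lt_div_iff₀ hL]
    exact hN
  refine (measure_mono hsub).trans_eq ?_
  rw [Real.volume_Ico, ← sub_div, add_sub_cancel_left, one_div, inv_pow]

lemma measurable_baseDigit (r : ℕ) : Measurable (baseDigit l r) :=
  measurable_from_top.comp (Nat.measurable_floor.comp (measurable_id.mul_const _))

end BaseDigits

section Lattice

variable {d : ℕ → Pt k}

def latticeBox (y : Pt k) : Finset (Pt k) :=
  (Fintype.piFinset fun i => Finset.Icc (⌈y i⌉ - 2) (⌈y i⌉ + 2)).image fun z i => (z i : ℝ)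

lemma card_latticeBox_le (y : Pt k) : (latticeBox y).card ≤ 5 ^ k :=
  Finset.card_image_le.trans <| by
    simp [Fintype.card_piFinset, Int.card_Icc, show ∀ z : ℤ, z + 2 + 1 - (z - 2) = 5 by
      intro z; ring]

lemma natCast_mem_latticeBox {y : Pt k} (N : Fin k → ℕ) (h : ‖(fun i => (N i : ℝ)) - y‖ ≤ 2) :
    (fun i => (N i : ℝ)) ∈ latticeBox y := by
  refine Finset.mem_image.2 ⟨fun i => N i, Fintype.mem_piFinset.2 fun i => ?_, by simp⟩
  have hi := (abs_le.1 ((norm_le_pi_norm _ i).trans h))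
  simp only [Pi.sub_apply] at hi
  have h1 := Int.ceil_le.2 (show y i ≤ ((N i + 2 : ℤ) : ℝ) by push_cast; linarith)
  have h2 : ((N i : ℤ) : ℝ) ≤ ((⌈y i⌉ + 2 : ℤ) : ℝ) := by
    push_cast; linarith [Int.le_ceil (y i)]
  rw [Finset.mem_Icc]
  exact ⟨by omega, Int.cast_le.1 h2⟩

lemma digitsValue_mem_latticeBox (hn : 1 < n) (hd : ∀ m, IsDigit n (d m)) {x : Pt k} {t : ℕ}
    (h : expansion n d ∈ closedBall x ((n : ℝ)⁻¹ ^ t)) :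
    digitsValue n d t ∈ latticeBox ((n : ℝ) ^ t • x) := by
  obtain ⟨N, hN⟩ := exists_digitsValue_eq_natCast hd t
  rw [hN]
  refine natCast_mem_latticeBox N ?_
  have hscale : (n : ℝ) ^ t • expansion n d
      = digitsValue n d t + expansion n fun m => d (m + t) := by
    rw [expansion_eq_smul_digitsValue_add hn hd t, smul_smul, ← mul_pow,
      mul_inv_cancel₀ (by positivity), one_pow, one_smul]
  have hx : ‖(n : ℝ) ^ t • expansion n d - (n : ℝ) ^ t • x‖ ≤ 1 := by
    rw [← smul_sub, norm_smul, norm_pow, Real.norm_natCast, ← dist_eq_norm]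
    calc (n : ℝ) ^ t * dist (expansion n d) x ≤ (n : ℝ) ^ t * (n : ℝ)⁻¹ ^ t := by gcongr; exact h
      _ = 1 := by rw [← mul_pow, mul_inv_cancel₀ (by positivity), one_pow]
  have hE := norm_expansion_le_one hn fun m => hd (m + t)
  rw [← hN]
  calc ‖digitsValue n d t - (n : ℝ) ^ t • x‖
      = ‖((n : ℝ) ^ t • expansion n d - (n : ℝ) ^ t • x) - expansion n fun m => d (m + t)‖ := by
        rw [hscale]; congr 1; abel
    _ ≤ 1 + 1 := (norm_sub_le _ _).trans (add_le_add hx hE)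
    _ = 2 := by norm_num

end Lattice

section SelfSimilarity

variable {D1 D2 K1 K2 : Set (Pt k)}

lemma inv_smul_add_mem_interF (hn : n ≠ 0) (hK1 : (n : ℝ) • K1 = K1 + D1)
    (hK2 : (n : ℝ) • K2 = K2 + D2) {β γ g x : Pt k} (hg : g ∈ Gab n D1 D2 β γ)
    (hx : x ∈ interF K1 K2 γ) : (n : ℝ)⁻¹ • (g + x) ∈ interF K1 K2 β := by
  obtain ⟨hgD, d, hd, hdg⟩ := hg
  obtain ⟨hxK, z, hz, hzx⟩ := hx
  have hn' : (n : ℝ) ≠ 0 := Nat.cast_ne_zero.2 hn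
  refine ⟨(Set.mem_smul_set_iff_inv_smul_mem₀ hn' _ _).1 ?_, (n : ℝ)⁻¹ • (z + d),
    (Set.mem_smul_set_iff_inv_smul_mem₀ hn' _ _).1 ?_, ?_⟩
  · rw [hK1, add_comm g x]
    exact Set.add_mem_add hxK hgD
  · rw [hK2]
    exact Set.add_mem_add hz hd
  · rw [← hdg, ← hzx]
    show (n : ℝ)⁻¹ • (z + d) + β = _
    rw [show d + ((n : ℝ) • β - γ) + (z + γ) = (z + d) + (n : ℝ) • β by abel, smul_add _ (z + d),
      smul_smul, inv_mul_cancel₀ hn', one_smul]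

lemma inv_pow_smul_digitsValue_add_mem_interF (hn : n ≠ 0) (hK1 : (n : ℝ) • K1 = K1 + D1)
    (hK2 : (n : ℝ) • K2 = K2 + D2) {v d : ℕ → Pt k} {t : ℕ}
    (hd : ∀ m < t, d m ∈ Gab n D1 D2 (v m) (v (m + 1))) {x : Pt k}
    (hx : x ∈ interF K1 K2 (v t)) :
    (n : ℝ)⁻¹ ^ t • (digitsValue n d t + x) ∈ interF K1 K2 (v 0) := by
  induction t generalizing x with
  | zero => simpa [digitsValue] using hx
  | succ t ih =>
    have hn' : (n : ℝ) ≠ 0 := Nat.cast_ne_zero.2 hn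
    convert ih (fun m hm => hd m (by omega))
      (inv_smul_add_mem_interF hn hK1 hK2 (hd t (by omega)) hx) using 1
    rw [digitsValue, pow_succ, mul_smul, add_assoc, smul_add _ ((n : ℝ) • _), smul_smul,
      inv_mul_cancel₀ hn', one_smul]

lemma expansion_mem_interF (hn : 1 < n) (hD1 : ∀ x ∈ D1, IsDigit n x)
    (hK1 : IsFractalCube n D1 K1) (hK2 : IsFractalCube n D2 K2) {v d : ℕ → Pt k}
    (hv : ∀ m, (interF K1 K2 (v m)).Nonempty)
    (hd : ∀ m, d m ∈ Gab n D1 D2 (v m) (v (m + 1))) :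
    expansion n d ∈ interF K1 K2 (v 0) := by
  choose x hx using hv
  have hdig : ∀ m, IsDigit n (d m) := fun m => hD1 _ (hd m).1
  have hclosed : IsClosed (interF K1 K2 (v 0)) :=
    hK1.2.1.isClosed.inter (hK2.2.1.image (continuous_add_const _)).isClosed
  obtain ⟨R, hR⟩ := hK1.2.1.isBounded.exists_norm_le
  have hbdd : ∀ t, ‖x t - expansion n fun m => d (m + t)‖ ≤ R + 1 := fun t =>
    (norm_sub_le _ _).trans (add_le_add (hR _ (hx t).1) (norm_expansion_le_one hn fun m => hdig _))
  have hlim : Tendsto (fun t => (n : ℝ)⁻¹ ^ t • (digitsValue n d t + x t)) atTop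
      (𝓝 (expansion n d)) := by
    have hsmall : Tendsto (fun t => (n : ℝ)⁻¹ ^ t • (x t - expansion n fun m => d (m + t)))
        atTop (𝓝 0) :=
      (tendsto_pow_atTop_nhds_zero_of_lt_one (by positivity)
        (inv_lt_one_of_one_lt₀ (by exact_mod_cast hn))).zero_smul_isBoundedUnder_le
        (isBoundedUnder_of ⟨R + 1, hbdd⟩)
    have := (tendsto_const_nhds (x := expansion n d)).add hsmall
    rw [add_zero] at this
    refine this.congr fun t => ?_
    rw [expansion_eq_smul_digitsValue_add hn hdig t, ← smul_add]
    congr 1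
    abel
  exact hclosed.mem_of_tendsto hlim (Eventually.of_forall fun t =>
    inv_pow_smul_digitsValue_add_mem_interF (by omega) hK1.2.2 hK2.2.2 (fun m _ => hd m) (hx t))

end SelfSimilarity

section StructureGraph

variable {D1 D2 : Set (Pt k)}

lemma SqLe.trans {α β γ : Pt k} (h₁ : SqLe α β) (h₂ : SqLe β γ) : SqLe α γ :=
  fun i hi => (h₂ i (h₁ i hi ▸ hi)).trans (h₁ i hi)

lemma sqLe_of_chain {c : ℕ → Pt k} {p i : ℕ} (hc : ∀ j < p, SqLe (c j) (c (j + 1))) (hi : i ≤ p) :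
    SqLe (c i) (c p) := by
  induction p, hi using Nat.le_induction with
  | base => exact fun _ _ => rfl
  | succ p hip ih => exact SqLe.trans (ih fun j hj => hc j (by omega)) (hc p (by omega))

lemma disjoint_Gab_zero_Ga (hD2 : ∀ x ∈ D2, IsDigit n x) {α β : Pt k} (hβ : IsAk β)
    (hβ0 : β ≠ 0) (hβα : SqLe β α) : Disjoint (Gab n D1 D2 0 β) (Ga n D1 D2 α) := by
  rw [Set.disjoint_left]
  rintro x ⟨-, d, hd, hdx⟩ ⟨-, d', hd', hdx'⟩
  obtain ⟨i, hi⟩ := Function.ne_iff.1 hβ0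
  obtain ⟨a, ha, hai⟩ := hD2 d hd i
  obtain ⟨a', ha', hai'⟩ := hD2 d' hd' i
  have ha : (a : ℝ) + 1 ≤ n := by exact_mod_cast ha
  have ha' : (a' : ℝ) + 1 ≤ n := by exact_mod_cast ha'
  -- at a coordinate where `β = α = ±1`, two digits of `D₂` would differ by `n`
  have h := congrFun (hdx.trans hdx'.symm) i
  simp only [Pi.add_apply, Pi.sub_apply, Pi.smul_apply, smul_eq_mul, Pi.zero_apply, mul_zero,
    zero_sub, hβα i hi, hai, hai'] at h
  rcases hβ i with hβi | hβi | hβi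
  · rw [hβi] at h; linarith [(Nat.cast_nonneg a : (0 : ℝ) ≤ a)]
  · exact hi hβi
  · rw [hβi] at h; linarith [(Nat.cast_nonneg a' : (0 : ℝ) ≤ a')]

end StructureGraph

/-- The digits of the `j`-th branch: the base-`l` digits `θ₀ θ₁ …` of `θ` are read as the word
`e₀(θ₀) ⋯ e₀(θ_{j-1}) g₀ ⋯ g_{p-1} eα(θ_j) eα(θ_{j+1}) ⋯`, i.e. `j` turns of the loop at `0`, the
chain from `0` to `α`, then the loop at `α` forever. -/
def branchDigit (l p : ℕ) [NeZero l] (e₀ eα : Fin l → Pt k) (g : ℕ → Pt k) (j : ℕ) (θ : ℝ)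
    (m : ℕ) : Pt k :=
  if m < j then e₀ (baseDigit l m θ) else if m < j + p then g (m - j)
  else eα (baseDigit l (m - p) θ)

section Branch

variable {D1 D2 K1 K2 : Set (Pt k)} {l p : ℕ} [NeZero l] {e₀ eα : Fin l → Pt k} {g : ℕ → Pt k}

lemma branchDigit_mem_Gab {c : ℕ → Pt k} {α : Pt k} (hc0 : c 0 = 0) (hcp : c p = α)
    (he₀ : ∀ a, e₀ a ∈ Ga n D1 D2 0) (heα : ∀ a, eα a ∈ Ga n D1 D2 α)
    (hg : ∀ i < p, g i ∈ Gab n D1 D2 (c i) (c (i + 1))) (j : ℕ) (θ : ℝ) (m : ℕ) :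
    branchDigit l p e₀ eα g j θ m ∈ Gab n D1 D2 (c (min (m - j) p)) (c (min (m + 1 - j) p)) := by
  unfold branchDigit
  split_ifs with h₁ h₂
  · rw [Nat.sub_eq_zero_of_le h₁.le, Nat.sub_eq_zero_of_le h₁, min_eq_left (Nat.zero_le p), hc0]
    exact he₀ _
  · rw [min_eq_left (by omega), min_eq_left (by omega), show m + 1 - j = m - j + 1 by omega]
    exact hg _ (by omega)
  · rw [min_eq_right (by omega), min_eq_right (by omega), hcp]
    exact heα _

lemma isDigit_branchDigit (he₀ : ∀ a, IsDigit n (e₀ a)) (heα : ∀ a, IsDigit n (eα a))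
    (hg : ∀ i < p, IsDigit n (g i)) (j : ℕ) (θ : ℝ) (m : ℕ) :
    IsDigit n (branchDigit l p e₀ eα g j θ m) := by
  unfold branchDigit
  split_ifs <;> first | exact he₀ _ | exact heα _ | exact hg _ (by omega)

lemma baseDigit_eq_of_branchDigit_eq (he₀ : Function.Injective e₀)
    (heα : Function.Injective eα) {j t : ℕ} {θ θ' : ℝ}
    (h : ∀ m < t, branchDigit l p e₀ eα g j θ m = branchDigit l p e₀ eα g j θ' m) :
    ∀ r < t - p, baseDigit l r θ = baseDigit l r θ' := by
  intro r hr
  by_cases hrj : r < j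
  · exact he₀ (by simpa [branchDigit, hrj] using h r (by omega))
  · have := h (r + p) (by omega)
    simp only [branchDigit, if_neg (show ¬ r + p < j by omega),
      if_neg (show ¬ r + p < j + p by omega), Nat.add_sub_cancel] at this
    exact heα this

lemma branchDigit_ne_of_add_le (hsep : ∀ a, eα a ≠ g 0) (hp : 0 < p) {j j' : ℕ}
    (hjj' : j + p ≤ j') (θ θ' : ℝ) :
    branchDigit l p e₀ eα g j θ j' ≠ branchDigit l p e₀ eα g j' θ' j' := by
  simpa [branchDigit, show ¬ j' < j by omega, show ¬ j' < j + p by omega, hp] using hsep _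

lemma measurable_branchDigit (j m : ℕ) :
    Measurable fun θ => branchDigit l p e₀ eα g j θ m := by
  unfold branchDigit
  split_ifs
  · exact measurable_from_top.comp (measurable_baseDigit m)
  · exact measurable_const
  · exact measurable_from_top.comp (measurable_baseDigit (m - p))

end Branch

lemma inv_pow_sub_le {l : ℕ} (hl : 0 < l) (t p : ℕ) :
    (l : ℝ)⁻¹ ^ (t - p) ≤ (l : ℝ) ^ p * (l : ℝ)⁻¹ ^ t := by
  have hl' : (1 : ℝ) ≤ l := by exact_mod_cast hl
  calc (l : ℝ)⁻¹ ^ (t - p) = (l : ℝ) ^ p * (l : ℝ)⁻¹ ^ (t - p + p) := by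
        rw [pow_add, mul_left_comm, ← mul_pow, mul_inv_cancel₀ (by positivity), one_pow,
          mul_one]
    _ ≤ (l : ℝ) ^ p * (l : ℝ)⁻¹ ^ t := mul_le_mul_of_nonneg_left
        (pow_le_pow_of_le_one (by positivity) (inv_le_one_of_one_le₀ hl') (by omega))
        (by positivity)

lemma inv_pow_rpow_logb {n l : ℕ} (hn : 1 < n) (hl : 0 < l) (t : ℕ) :
    ((n : ℝ)⁻¹ ^ t) ^ Real.logb n l = (l : ℝ)⁻¹ ^ t := by
  have hn' : (1 : ℝ) < n := by exact_mod_cast hn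
  rw [← Real.rpow_pow_comm (by positivity), Real.inv_rpow (by positivity),
    Real.rpow_logb (by positivity) hn'.ne' (by exact_mod_cast hl)]

def branch (n l p : ℕ) [NeZero l] (e₀ eα : Fin l → Pt k) (g : ℕ → Pt k) (j : ℕ) (θ : ℝ) :
    Pt k :=
  expansion n (branchDigit l p e₀ eα g j θ)

def branchMeasure (n l p : ℕ) [NeZero l] (e₀ eα : Fin l → Pt k) (g : ℕ → Pt k) (T : ℕ) :
    Measure (Pt k) :=
  ∑ j ∈ Finset.range T, (volume.restrict (Ico (0 : ℝ) 1)).map (branch n l p e₀ eα g j)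

def branchFiber (n l p : ℕ) [NeZero l] (e₀ eα : Fin l → Pt k) (g : ℕ → Pt k) (j t : ℕ)
    (y : Pt k) : Set ℝ :=
  {θ ∈ Ico (0 : ℝ) 1 | digitsValue n (branchDigit l p e₀ eα g j θ) t = y}

section BranchMeasure

variable {D1 D2 K1 K2 : Set (Pt k)} {l p : ℕ} [NeZero l] {e₀ eα : Fin l → Pt k} {g : ℕ → Pt k}

lemma measurable_branch (hn : 1 < n) (he₀ : ∀ a, IsDigit n (e₀ a)) (heα : ∀ a, IsDigit n (eα a))
    (hg : ∀ i < p, IsDigit n (g i)) (j : ℕ) : Measurable (branch n l p e₀ eα g j) := by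
  have hdigit : ∀ m, Measurable fun θ => branchDigit l p e₀ eα g j θ m :=
    measurable_branchDigit j
  refine measurable_of_tendsto_metrizable (fun M => Finset.measurable_sum (Finset.range M)
    fun m _ => (hdigit m).const_smul ((n : ℝ)⁻¹ ^ (m + 1))) ?_
  exact tendsto_pi_nhds.2 fun θ =>
    (summable_expansion hn (isDigit_branchDigit he₀ heα hg j θ)).hasSum.tendsto_sum_nat

lemma branch_mem_interF (hn : 1 < n) (hD1 : ∀ x ∈ D1, IsDigit n x)
    (hK1 : IsFractalCube n D1 K1) (hK2 : IsFractalCube n D2 K2) {c : ℕ → Pt k} {α : Pt k}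
    (hc0 : c 0 = 0) (hcp : c p = α) (hF : ∀ i ≤ p, (interF K1 K2 (c i)).Nonempty)
    (he₀ : ∀ a, e₀ a ∈ Ga n D1 D2 0) (heα : ∀ a, eα a ∈ Ga n D1 D2 α)
    (hg : ∀ i < p, g i ∈ Gab n D1 D2 (c i) (c (i + 1))) (j : ℕ) (θ : ℝ) :
    branch n l p e₀ eα g j θ ∈ interF K1 K2 0 := by
  have := expansion_mem_interF hn hD1 hK1 hK2 (v := fun m => c (min (m - j) p))
    (fun m => hF _ (min_le_right _ _)) (branchDigit_mem_Gab hc0 hcp he₀ heα hg j θ)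
  unfold branch
  simpa [hc0] using this

lemma branchMeasure_interF (hn : 1 < n) (hD1 : ∀ x ∈ D1, IsDigit n x)
    (hK1 : IsFractalCube n D1 K1) (hK2 : IsFractalCube n D2 K2) {c : ℕ → Pt k} {α : Pt k}
    (hc0 : c 0 = 0) (hcp : c p = α) (hF : ∀ i ≤ p, (interF K1 K2 (c i)).Nonempty)
    (he₀ : ∀ a, e₀ a ∈ Ga n D1 D2 0) (heα : ∀ a, eα a ∈ Ga n D1 D2 α)
    (hg : ∀ i < p, g i ∈ Gab n D1 D2 (c i) (c (i + 1))) (T : ℕ) :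
    branchMeasure n l p e₀ eα g T (interF K1 K2 0) = T := by
  have hdig : ∀ {β γ} x, x ∈ Gab n D1 D2 β γ → IsDigit n x := fun x hx => hD1 x hx.1
  have hmeas := measurable_branch (l := l) (e₀ := e₀) (eα := eα) hn (fun a => hdig _ (he₀ a))
    (fun a => hdig _ (heα a)) fun i hi => hdig _ (hg i hi)
  have hclosed : MeasurableSet (interF K1 K2 0) :=
    (hK1.2.1.inter_right (hK2.2.1.image (continuous_add_const _)).isClosed).isClosed.measurableSet
  have hpre : ∀ j, branch n l p e₀ eα g j ⁻¹' interF K1 K2 0 = univ := fun j =>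
    eq_univ_of_forall (branch_mem_interF hn hD1 hK1 hK2 hc0 hcp hF he₀ heα hg j)
  simp [branchMeasure, Measure.finsetSum_apply, Measure.map_apply (hmeas _) hclosed, hpre]

lemma volume_branchFiber_le (he₀ : ∀ a, IsDigit n (e₀ a)) (heα : ∀ a, IsDigit n (eα a))
    (hg : ∀ i < p, IsDigit n (g i)) (he₀i : Function.Injective e₀)
    (heαi : Function.Injective eα) (j t : ℕ) (y : Pt k) :
    volume (branchFiber n l p e₀ eα g j t y) ≤ ENNReal.ofReal ((l : ℝ)⁻¹ ^ (t - p)) := by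
  rcases (branchFiber n l p e₀ eα g j t y).eq_empty_or_nonempty with h | ⟨θ₁, -, hθ₁⟩
  · rw [h, measure_empty]
    exact zero_le
  have hsub : branchFiber n l p e₀ eα g j t y
      ⊆ {θ ∈ Ico (0 : ℝ) 1 | ∀ r < t - p, baseDigit l r θ = baseDigit l r θ₁} := fun θ hθ =>
    ⟨hθ.1, baseDigit_eq_of_branchDigit_eq he₀i heαi (eq_of_digitsValue_eq
      (isDigit_branchDigit he₀ heα hg j θ) (isDigit_branchDigit he₀ heα hg j θ₁)
      (hθ.2.trans hθ₁.symm))⟩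
  exact (measure_mono hsub).trans (volume_baseDigit_cylinder_le _ _)

lemma sum_volume_branchFiber_le (he₀ : ∀ a, IsDigit n (e₀ a)) (heα : ∀ a, IsDigit n (eα a))
    (hg : ∀ i < p, IsDigit n (g i)) (he₀i : Function.Injective e₀)
    (heαi : Function.Injective eα) (hsep : ∀ a, eα a ≠ g 0) (hp : 0 < p) {T t : ℕ}
    (hT : T ≤ t) (y : Pt k) :
    ∑ j ∈ Finset.range T, volume (branchFiber n l p e₀ eα g j t y)
      ≤ p * ENNReal.ofReal ((l : ℝ)⁻¹ ^ (t - p)) := by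
  classical
  set J := (Finset.range T).filter fun j => (branchFiber n l p e₀ eα g j t y).Nonempty
  -- branches `j + p ≤ j'` differ at digit `j'`, so they cannot both reach `y`
  have hJ : J.card ≤ p := Finset.card_le_of_forall_lt_add fun j hj j' hj' _ => by
    obtain ⟨-, θ, -, hθ⟩ := Finset.mem_filter.1 hj
    obtain ⟨hj'T, θ', -, hθ'⟩ := Finset.mem_filter.1 hj'
    by_contra! hjj'
    refine branchDigit_ne_of_add_le hsep hp hjj' θ θ' (eq_of_digitsValue_eq
      (isDigit_branchDigit he₀ heα hg j θ) (isDigit_branchDigit he₀ heα hg j' θ')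
      (hθ.trans hθ'.symm) j' ?_)
    have := Finset.mem_range.1 hj'T
    omega
  rw [← Finset.sum_filter_of_ne fun j _ hj => nonempty_of_measure_ne_zero hj]
  calc ∑ j ∈ J, volume (branchFiber n l p e₀ eα g j t y)
      ≤ J.card • ENNReal.ofReal ((l : ℝ)⁻¹ ^ (t - p)) := Finset.sum_le_card_nsmul _ _ _
        fun j _ => volume_branchFiber_le he₀ heα hg he₀i heαi j t y
    _ ≤ p * ENNReal.ofReal ((l : ℝ)⁻¹ ^ (t - p)) := by
        rw [nsmul_eq_mul]
        gcongr

lemma preimage_closedBall_subset_branchFiber (hn : 1 < n) (he₀ : ∀ a, IsDigit n (e₀ a))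
    (heα : ∀ a, IsDigit n (eα a)) (hg : ∀ i < p, IsDigit n (g i)) (j t : ℕ) (x : Pt k) :
    branch n l p e₀ eα g j ⁻¹' closedBall x ((n : ℝ)⁻¹ ^ t) ∩ Ico 0 1
      ⊆ ⋃ y ∈ latticeBox ((n : ℝ) ^ t • x), branchFiber n l p e₀ eα g j t y := fun θ hθ =>
  mem_biUnion (digitsValue_mem_latticeBox hn (isDigit_branchDigit he₀ heα hg j θ) hθ.1)
    ⟨hθ.2, rfl⟩

lemma branchMeasure_closedBall_le (hn : 1 < n) (he₀ : ∀ a, IsDigit n (e₀ a))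
    (heα : ∀ a, IsDigit n (eα a)) (hg : ∀ i < p, IsDigit n (g i))
    (he₀i : Function.Injective e₀) (heαi : Function.Injective eα) (hsep : ∀ a, eα a ≠ g 0)
    (hp : 0 < p) {T t : ℕ} (hT : T ≤ t) (x : Pt k) :
    branchMeasure n l p e₀ eα g T (closedBall x ((n : ℝ)⁻¹ ^ t))
      ≤ 5 ^ k * p * ENNReal.ofReal ((l : ℝ) ^ p)
        * ENNReal.ofReal (((n : ℝ)⁻¹ ^ t) ^ Real.logb n l) := by
  have hmeas := measurable_branch (l := l) (e₀ := e₀) (eα := eα) (g := g) hn he₀ heα hg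
  set B := latticeBox ((n : ℝ) ^ t • x)
  calc branchMeasure n l p e₀ eα g T (closedBall x ((n : ℝ)⁻¹ ^ t))
      = ∑ j ∈ Finset.range T,
          volume (branch n l p e₀ eα g j ⁻¹' closedBall x ((n : ℝ)⁻¹ ^ t) ∩ Ico 0 1) := by
        simp only [branchMeasure, Measure.finsetSum_apply,
          Measure.map_apply (hmeas _) measurableSet_closedBall,
          Measure.restrict_apply (hmeas _ measurableSet_closedBall)]
    _ ≤ ∑ j ∈ Finset.range T, ∑ y ∈ B, volume (branchFiber n l p e₀ eα g j t y) :=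
        Finset.sum_le_sum fun j _ => (measure_mono
          (preimage_closedBall_subset_branchFiber hn he₀ heα hg j t x)).trans
          (measure_biUnion_finset_le _ _)
    _ = ∑ y ∈ B, ∑ j ∈ Finset.range T, volume (branchFiber n l p e₀ eα g j t y) :=
        Finset.sum_comm
    _ ≤ ∑ _y ∈ B, p * ENNReal.ofReal ((l : ℝ)⁻¹ ^ (t - p)) := Finset.sum_le_sum fun y _ =>
        sum_volume_branchFiber_le he₀ heα hg he₀i heαi hsep hp hT y
    _ ≤ 5 ^ k * p * ENNReal.ofReal ((l : ℝ)⁻¹ ^ (t - p)) := by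
        rw [Finset.sum_const, nsmul_eq_mul, mul_assoc]
        gcongr
        exact_mod_cast card_latticeBox_le _
    _ ≤ 5 ^ k * p * ENNReal.ofReal ((l : ℝ) ^ p)
          * ENNReal.ofReal (((n : ℝ)⁻¹ ^ t) ^ Real.logb n l) := by
        rw [inv_pow_rpow_logb hn (Nat.pos_of_neZero l), mul_assoc _ (ENNReal.ofReal _),
          ← ENNReal.ofReal_mul (by positivity)]
        gcongr
        exact inv_pow_sub_le (Nat.pos_of_neZero l) t p

end BranchMeasure

end FractalCube

open FractalCube

theorem measure_interF_infinite_general {k n : ℕ} (hn : 2 ≤ n)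
    (D1 D2 K1 K2 : Set (Pt k)) (hD1 : IsDigitSet n D1) (hD2 : IsDigitSet n D2)
    (hK1 : IsFractalCube n D1 K1) (hK2 : IsFractalCube n D2 K2)
    (α : Pt k)
    (hsucc : GSucc n D1 D2 K1 K2 α 0)
    (l : ℕ) (hl : 1 ≤ l)
    (hG0 : (Ga n D1 D2 0).ncard = l) (hGα : (Ga n D1 D2 α).ncard = l) :
    μH[Real.logb n l] (interF K1 K2 0) = ⊤ := by
  obtain ⟨p, hp, c, hc0, hcp, hAk, hlt, hF, hG⟩ := hsucc
  choose! g hg using hG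
  have : NeZero l := ⟨by omega⟩
  obtain ⟨e₀, he₀⟩ := Set.exists_embedding_of_ncard_eq hl hG0
  obtain ⟨eα, heα⟩ := Set.exists_embedding_of_ncard_eq hl hGα
  have hdig : ∀ {β γ} x, x ∈ Gab n D1 D2 β γ → IsDigit n x := fun x hx => hD1.2 x hx.1
  have hc₁ : c 1 ≠ 0 := fun h => (hlt 0 hp).2 (hc0.trans h.symm)
  have hsep : ∀ a, eα a ≠ g 0 := fun a h => Set.disjoint_left.1
    (disjoint_Gab_zero_Ga hD2.2 (hAk 1 hp) hc₁ (hcp ▸ sqLe_of_chain (fun j hj => (hlt j hj).1) hp))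
    (hc0 ▸ hg 0 hp) (h ▸ heα a)
  have hn1 : 1 < n := by omega
  set C : ℝ≥0∞ := 5 ^ k * p * ENNReal.ofReal ((l : ℝ) ^ p)
  have hC : C ≠ ⊤ := by simp [C, ENNReal.mul_eq_top]
  refine ENNReal.eq_top_of_forall_natCast_le_mul
    (a := C * ENNReal.ofReal ((n : ℝ)⁻¹ ^ (-Real.logb n l)))
    (ENNReal.mul_ne_top hC ENNReal.ofReal_ne_top) fun T => ?_
  calc (T : ℝ≥0∞) = branchMeasure n l p e₀ eα g T (interF K1 K2 0) :=
        (branchMeasure_interF hn1 hD1.2 hK1 hK2 hc0 hcp hF he₀ heα hg T).symm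
    _ ≤ _ := Measure.le_smul_hausdorffMeasure_of_closedBall_le _ (by positivity)
        (inv_lt_one_of_one_lt₀ (by exact_mod_cast hn1))
        (Real.logb_nonneg (by exact_mod_cast hn1) (by exact_mod_cast hl)) (by positivity) hC T
        (fun x t ht => branchMeasure_closedBall_le hn1 (fun a => hdig _ (he₀ a))
          (fun a => hdig _ (heα a)) (fun i hi => hdig _ (hg i hi)) e₀.injective eα.injective
          hsep hp ht x) _

/-- if `α ≻ 0`, `#G₀ = #G_α = l ≥ 1` and `#G_β ≤ l` for all `β ≻ 0`,
then `H^s(F₀) = ∞` for `s = log_n l`. -/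
theorem measure_interF_infinite {k n : ℕ} (hk : 1 ≤ k) (hn : 2 ≤ n)
    (D1 D2 K1 K2 : Set (Pt k)) (hD1 : IsDigitSet n D1) (hD2 : IsDigitSet n D2)
    (hK1 : IsFractalCube n D1 K1) (hK2 : IsFractalCube n D2 K2)
    (α : Pt k) (hα : IsAk α) (hα0 : α ≠ 0)
    (hsucc : GSucc n D1 D2 K1 K2 α 0)
    (l : ℕ) (hl : 1 ≤ l)
    (hG0 : (Ga n D1 D2 0).ncard = l) (hGα : (Ga n D1 D2 α).ncard = l)
    (hmax : ∀ β, IsAk β → GSucc n D1 D2 K1 K2 β 0 → (Ga n D1 D2 β).ncard ≤ l) :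
    μH[Real.logb n l] (interF K1 K2 0) = ⊤ :=
  measure_interF_infinite_general hn D1 D2 K1 K2 hD1 hD2 hK1 hK2 α hsucc l hl hG0 hGα
end
end
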